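/- arXiv:2504.12935 — 7 statements merged into one kernel-verified Lean document; each statement's English description precedes it below -/
import Mathlib

section
/- Let n ≥ 2, let t = (t₁ ≤ ⋯ ≤ tₙ) ∈ I^n_≤ and 1 ≤ i ≤ n, and let t' ∈ I^{n−1}_≤ be the tuple obtained from t by deleting the i-th entry. If ℙ_t is the unique Borel probability measure on Eⁿ with ∫ f₁(x₁)⋯fₙ(xₙ) dℙ_t = 𝒮_{f₁,…,fₙ}(t) for all fⱼ ∈ C(E,ℂ), and ℙ_{t'} is the analogous measure on E^{n−1} for t', then the pushforward of ℙ_t under the map Eⁿ → E^{n−1} that deletes the i-th coordinate equals ℙ_{t'}. -/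
/-!
Deleting the `i`-th coordinate turns the product test function `∏ j, f j (x j)` on `Eⁿ` into the
product test function on `Eⁿ⁺¹` with the constant `1` inserted at position `i`, so by consistency
the pushforward of `ℙ_t` has the same product moments as `ℙ_{t'}`. These moments determine a
finite Borel measure on the compact metrizable space `Eⁿ`: by Stone–Weierstrass the span of the
product functions is dense in `C(Eⁿ, ℂ)`, and integration against a finite measure is a
continuous linear functional there.
-/

open MeasureTheory

namespace ContinuousMap

section piProd

variable {ι E M : Type*} [Fintype ι] [TopologicalSpace E] [TopologicalSpace M] [CommMonoid M]
  [ContinuousMul M]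

noncomputable def piProd : (ι → C(E, M)) →* C(ι → E, M) where
  toFun f := ∏ i, (f i).comp (eval i)
  map_one' := by ext; simp
  map_mul' f g := by ext; simp [Finset.prod_mul_distrib]

@[simp]
lemma piProd_apply (f : ι → C(E, M)) (x : ι → E) : piProd f x = ∏ i, f i (x i) := by
  simp [piProd]

end piProd

section StoneWeierstrass

variable {ι E 𝕜 : Type*} [Fintype ι] [TopologicalSpace E] [RCLike 𝕜]

lemma star_piProd (f : ι → C(E, 𝕜)) : star (piProd f) = piProd (star f) := by
  ext x
  simp [star_prod]

lemma adjoin_range_piProd_toSubmodule :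
    Subalgebra.toSubmodule
        (StarAlgebra.adjoin 𝕜 (Set.range (piProd (ι := ι) (E := E) (M := 𝕜)))).toSubalgebra =
      Submodule.span 𝕜 (Set.range (piProd (ι := ι) (E := E) (M := 𝕜))) := by
  have hstar : star (Set.range (piProd (ι := ι) (E := E) (M := 𝕜))) ⊆ Set.range piProd := by
    rintro _ ⟨f, hf⟩
    exact ⟨star f, by rw [← star_piProd, hf, star_star]⟩
  rw [StarAlgebra.adjoin_eq_span, Set.union_eq_left.mpr hstar, ← MonoidHom.coe_mrange,
    Submonoid.closure_eq]

lemma separatesPoints_adjoin_range_piProd [T35Space E] :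
    (StarAlgebra.adjoin 𝕜 (Set.range (piProd (ι := ι) (E := E) (M := 𝕜)))).SeparatesPoints := by
  classical
  intro x y hxy
  obtain ⟨j, hj⟩ := Function.ne_iff.mp hxy
  obtain ⟨g, hg, hgj⟩ := separatesPoints_continuous_of_t35Space hj
  let g' : C(E, 𝕜) := ⟨fun e => (g e : 𝕜), RCLike.continuous_ofReal.comp hg⟩
  have hprod (z : ι → E) : piProd (Pi.mulSingle j g') z = g (z j) := by
    rw [piProd_apply, Fintype.prod_eq_single j fun k hk => by simp [hk]]
    simp [g']
  refine ⟨_, ⟨piProd (Pi.mulSingle j g'), StarAlgebra.subset_adjoin 𝕜 _ ⟨_, rfl⟩, rfl⟩, ?_⟩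
  simpa [hprod] using hgj

lemma dense_span_range_piProd [CompactSpace E] [T35Space E] :
    Dense (Submodule.span 𝕜 (Set.range (piProd (ι := ι) (E := E) (M := 𝕜))) :
      Set C(ι → E, 𝕜)) := by
  rw [← adjoin_range_piProd_toSubmodule, Subalgebra.coe_toSubmodule,
    StarSubalgebra.coe_toSubalgebra, dense_iff_closure_eq, ← StarSubalgebra.topologicalClosure_coe,
    starSubalgebra_topologicalClosure_eq_top_of_separatesPoints _
      separatesPoints_adjoin_range_piProd, StarSubalgebra.coe_top]

end StoneWeierstrass

section integral

variable {X 𝕜 : Type*} [TopologicalSpace X] [CompactSpace X] [MeasurableSpace X]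
  [OpensMeasurableSpace X] [RCLike 𝕜]

lemma integrable (g : C(X, 𝕜)) (μ : Measure X) [IsFiniteMeasure μ] : Integrable g μ :=
  (BoundedContinuousFunction.mkOfCompact g).integrable μ

noncomputable def integralCLM (μ : Measure X) [IsFiniteMeasure μ] : C(X, 𝕜) →L[𝕜] 𝕜 :=
  LinearMap.mkContinuous
    { toFun g := ∫ x, g x ∂μ
      map_add' g h := integral_add (g.integrable μ) (h.integrable μ)
      map_smul' c g := integral_smul c g }
    (μ.real Set.univ) fun g => by
      simpa using (BoundedContinuousFunction.mkOfCompact g).norm_integral_le_mul_norm μ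

@[simp]
lemma integralCLM_apply (μ : Measure X) [IsFiniteMeasure μ] (g : C(X, 𝕜)) :
    integralCLM μ g = ∫ x, g x ∂μ := rfl

end integral

end ContinuousMap

namespace MeasureTheory.Measure

theorem ext_of_integralCLM_eq {X 𝕜 : Type*} [TopologicalSpace X] [CompactSpace X]
    [HasOuterApproxClosed X] [MeasurableSpace X] [BorelSpace X] [RCLike 𝕜] {μ ν : Measure X}
    [IsFiniteMeasure μ] [IsFiniteMeasure ν]
    (h : ContinuousMap.integralCLM (𝕜 := 𝕜) μ = ContinuousMap.integralCLM ν) : μ = ν := by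
  refine ext_of_forall_integral_eq_of_IsFiniteMeasure fun f => ?_
  have := congrArg (· ((ContinuousMap.mk _ RCLike.continuous_ofReal).comp f.toContinuousMap)) h
  simpa [integral_ofReal] using this

theorem ext_of_forall_integral_prod_eq {ι E 𝕜 : Type*} [Fintype ι] [TopologicalSpace E]
    [CompactSpace E] [T2Space E] [SecondCountableTopology E] [MeasurableSpace E] [BorelSpace E]
    [RCLike 𝕜] {μ ν : Measure (ι → E)} [IsFiniteMeasure μ] [IsFiniteMeasure ν]
    (h : ∀ f : ι → C(E, 𝕜), ∫ x, ∏ i, f i (x i) ∂μ = ∫ x, ∏ i, f i (x i) ∂ν) : μ = ν :=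
  ext_of_integralCLM_eq <| ContinuousLinearMap.ext_on ContinuousMap.dense_span_range_piProd <| by
    rintro _ ⟨f, rfl⟩
    simpa using h f

end MeasureTheory.Measure

theorem stmt_2_general
    (E : Type) [TopologicalSpace E] [CompactSpace E] [T2Space E]
    [SecondCountableTopology E] [MeasurableSpace E] [BorelSpace E]
    (I : Set ℝ)
    (S : ∀ n : ℕ, (Fin n → C(E, ℂ)) → (Fin n → ℝ) → ℂ)
    (hScons : ∀ (n : ℕ) (t : Fin (n + 1) → ℝ), (∀ i, t i ∈ I) → Monotone t →
      ∀ (f : Fin (n + 1) → C(E, ℂ)) (i : Fin (n + 1)), f i = 1 →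
        S (n + 1) f t = S n (f ∘ i.succAbove) (t ∘ i.succAbove)) :
    ∀ n : ℕ, 1 ≤ n → ∀ t : Fin (n + 1) → ℝ, (∀ i, t i ∈ I) → Monotone t →
      ∀ i : Fin (n + 1),
      ∀ (μ : Measure (Fin (n + 1) → E)) (ν : Measure (Fin n → E)),
        IsProbabilityMeasure μ → IsProbabilityMeasure ν →
        (∀ f : Fin (n + 1) → C(E, ℂ), ∫ x, ∏ j, f j (x j) ∂μ = S (n + 1) f t) →
        (∀ f : Fin n → C(E, ℂ),
          ∫ x, ∏ j, f j (x j) ∂ν = S n f (t ∘ i.succAbove)) →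
        Measure.map (fun (x : Fin (n + 1) → E) => x ∘ i.succAbove) μ = ν := by
  intro n _ t ht hmono i μ ν _ _ hμ hν
  have hdel : Measurable fun x : Fin (n + 1) → E => x ∘ i.succAbove := by fun_prop
  have := Measure.isProbabilityMeasure_map (μ := μ) hdel.aemeasurable
  refine Measure.ext_of_forall_integral_prod_eq fun f : Fin n → C(E, ℂ) => ?_
  have hextend : (i.insertNth 1 f : Fin (n + 1) → C(E, ℂ)) i = 1 := Fin.insertNth_apply_same ..
  rw [integral_map hdel.aemeasurable
    (by fun_prop : Continuous fun y : Fin n → E => ∏ j, f j (y j)).aestronglyMeasurable, hν,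
    ← Fin.insertNth_comp_succAbove i 1 f, ← hScons n t ht hmono _ i hextend, ← hμ]
  simp [Fin.prod_univ_succAbove _ i]

/-- For a nondecreasing tuple `t` of length `n + 1` (so `n + 1 ≥ 2`)
with entries in `I`, and `i` an index, let `t' = t ∘ i.succAbove` be the tuple obtained
by deleting the `i`-th entry.  If `μ` is the (unique) Borel probability measure matching
the moments `𝒮` at `t` and `ν` the one matching the moments at `t'`, then the pushforward
of `μ` under the coordinate-deletion map equals `ν`. -/
theorem stmt_2
    (E : Type) [TopologicalSpace E] [CompactSpace E] [T2Space E]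
    [SecondCountableTopology E] [MeasurableSpace E] [BorelSpace E]
    (I : Set ℝ) (hI : I.OrdConnected)
    (S : ∀ n : ℕ, (Fin n → C(E, ℂ)) → (Fin n → ℝ) → ℂ)
    (hScont : ∀ (n : ℕ) (f : Fin n → C(E, ℂ)),
      ContinuousOn (S n f) {t : Fin n → ℝ | (∀ i, t i ∈ I) ∧ Monotone t})
    (hSlin : ∀ (n : ℕ) (t : Fin n → ℝ), (∀ i, t i ∈ I) → Monotone t →
      ∀ (f : Fin n → C(E, ℂ)) (i : Fin n) (c : ℂ) (g h : C(E, ℂ)),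
        S n (Function.update f i (c • g + h)) t
          = c * S n (Function.update f i g) t + S n (Function.update f i h) t)
    (hSbdd : ∀ (n : ℕ) (t : Fin n → ℝ), (∀ i, t i ∈ I) → Monotone t →
      ∃ C > 0, ∀ f : Fin n → C(E, ℂ), ‖S n f t‖ ≤ C * ∏ i, ‖f i‖)
    (hScons : ∀ (n : ℕ) (t : Fin (n + 1) → ℝ), (∀ i, t i ∈ I) → Monotone t →
      ∀ (f : Fin (n + 1) → C(E, ℂ)) (i : Fin (n + 1)), f i = 1 →
        S (n + 1) f t = S n (f ∘ i.succAbove) (t ∘ i.succAbove))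
    (hSnorm : ∀ t : Fin 1 → ℝ, (∀ i, t i ∈ I) → S 1 (fun _ => 1) t = 1)
    (hSpos : ∀ (n : ℕ) (t : Fin n → ℝ), (∀ i, t i ∈ I) → Monotone t →
      ∀ f : Fin n → C(E, ℂ), (∀ i x, (f i x).im = 0 ∧ 0 ≤ (f i x).re) →
        0 ≤ (S n f t).re ∧ (S n f t).im = 0) :
    ∀ n : ℕ, 1 ≤ n → ∀ t : Fin (n + 1) → ℝ, (∀ i, t i ∈ I) → Monotone t →
      ∀ i : Fin (n + 1),
      ∀ (μ : Measure (Fin (n + 1) → E)) (ν : Measure (Fin n → E)),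
        IsProbabilityMeasure μ → IsProbabilityMeasure ν →
        (∀ f : Fin (n + 1) → C(E, ℂ), ∫ x, ∏ j, f j (x j) ∂μ = S (n + 1) f t) →
        (∀ f : Fin n → C(E, ℂ),
          ∫ x, ∏ j, f j (x j) ∂ν = S n f (t ∘ i.succAbove)) →
        Measure.map (fun (x : Fin (n + 1) → E) => x ∘ i.succAbove) μ = ν :=
  stmt_2_general E I S hScons
end

section
/- Let β > 0, I = [−β/2, β/2], and let ℙ be any probability measure on E^I (product σ-algebra) satisfying ∫ f₁(x(t₁))⋯fₙ(x(tₙ)) dℙ(x) = 𝒮_{f₁,…,fₙ}(t₁,…,tₙ) for all n ≥ 1, (t₁,…,tₙ) ∈ I^n_≤ and fᵢ ∈ C(E,ℂ). Suppose that for every f ∈ C(E,ℂ): 𝒮_{f, f̄}(−β/2, −β/2) + 𝒮_{f̄, f}(β/2, β/2) = 𝒮_{f, f̄}(−β/2, β/2) + 𝒮_{f̄, f}(−β/2, β/2), where f̄ denotes the complex conjugate function. Then x(−β/2) = x(β/2) for ℙ-almost every x ∈ E^I. -/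
/-!
The hypothesis on `𝒮` says exactly that `𝔼 |f(x(-β/2)) - f(x(β/2))|² = 0` for every continuous
`f`: expand the square and read off the four second moments. Hence `f(x(-β/2)) = f(x(β/2))`
almost surely for each `f`, and since `E` is metrizable and second countable, countably many
closed sets separate its points, each of them the zero set of a continuous function
(the distance to it).
-/

open MeasureTheory ComplexConjugate Filter

section

variable {Ω E : Type*} [MeasurableSpace Ω] {μ : Measure Ω}

theorem ae_eq_of_forall_continuousMap_ae_eq [TopologicalSpace E]
    [TopologicalSpace.MetrizableSpace E] [SecondCountableTopology E] {X Y : Ω → E}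
    (h : ∀ f : C(E, ℝ), ∀ᵐ ω ∂μ, f (X ω) = f (Y ω)) : X =ᵐ[μ] Y := by
  let _ := TopologicalSpace.metrizableSpaceMetric E
  refine EventuallyEq.of_forall_separating_mem_iff IsClosed fun U hU => ?_
  rcases U.eq_empty_or_nonempty with rfl | hne
  · simp
  filter_upwards [h ⟨(Metric.infDist · U), Metric.continuous_infDist_pt U⟩] with ω hω
  rw [hU.mem_iff_infDist_zero hne, hU.mem_iff_infDist_zero hne]
  exact Eq.congr_left hω

theorem ae_eq_zero_of_integral_mul_conj_eq_zero {F : Ω → ℂ}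
    (hF : Integrable (fun ω => F ω * conj (F ω)) μ) (h : ∫ ω, F ω * conj (F ω) ∂μ = 0) :
    F =ᵐ[μ] 0 := by
  simp_rw [Complex.mul_conj] at hF h
  rw [integral_complex_ofReal, Complex.ofReal_eq_zero] at h
  have hnormSq := (integral_eq_zero_iff_of_nonneg (fun ω => Complex.normSq_nonneg (F ω))
    (by simpa using hF.re)).mp h
  filter_upwards [hnormSq] with ω hω
  exact Complex.normSq_eq_zero.mp hω

theorem integrable_comp_mul_comp [TopologicalSpace E] [CompactSpace E] [MeasurableSpace E]
    [OpensMeasurableSpace E] [IsFiniteMeasure μ] {X Y : Ω → E} (hX : Measurable X)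
    (hY : Measurable Y) (g h : C(E, ℂ)) : Integrable (fun ω => g (X ω) * h (Y ω)) μ := by
  refine .of_bound (by fun_prop) (‖g‖ * ‖h‖) (.of_forall fun ω => ?_)
  rw [norm_mul]
  exact mul_le_mul (g.norm_coe_le_norm _) (h.norm_coe_le_norm _) (norm_nonneg _) (norm_nonneg _)

theorem ae_apply_eq_of_integral_mul_star [TopologicalSpace E] [CompactSpace E]
    [MeasurableSpace E] [OpensMeasurableSpace E] [IsFiniteMeasure μ] {X Y : Ω → E}
    (hX : Measurable X) (hY : Measurable Y) (f : C(E, ℂ))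
    (h : ∫ ω, f (X ω) * star f (X ω) ∂μ + ∫ ω, star f (Y ω) * f (Y ω) ∂μ
      = ∫ ω, f (X ω) * star f (Y ω) ∂μ + ∫ ω, star f (X ω) * f (Y ω) ∂μ) :
    ∀ᵐ ω ∂μ, f (X ω) = f (Y ω) := by
  set F : Ω → ℂ := fun ω => f (X ω) - f (Y ω)
  have hexpand : (fun ω => F ω * conj (F ω)) = fun ω =>
      (f (X ω) * star f (X ω) + star f (Y ω) * f (Y ω))
        - (f (X ω) * star f (Y ω) + star f (X ω) * f (Y ω)) := by
    ext ω
    simp only [F, ContinuousMap.star_apply, map_sub, Complex.star_def]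
    ring
  have hXX := integrable_comp_mul_comp (μ := μ) hX hX f (star f)
  have hYY := integrable_comp_mul_comp (μ := μ) hY hY (star f) f
  have hXY := integrable_comp_mul_comp (μ := μ) hX hY f (star f)
  have hYX := integrable_comp_mul_comp (μ := μ) hX hY (star f) f
  have hFint : Integrable (fun ω => F ω * conj (F ω)) μ := by
    rw [hexpand]
    exact (hXX.add hYY).sub (hXY.add hYX)
  have hF0 : ∫ ω, F ω * conj (F ω) ∂μ = 0 := by
    rw [hexpand, integral_sub, integral_add hXX hYY, integral_add hXY hYX, h, sub_self]
    exacts [hXX.add hYY, hXY.add hYX]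
  filter_upwards [ae_eq_zero_of_integral_mul_conj_eq_zero hFint hF0] with ω hω
  exact sub_eq_zero.mp hω

end

theorem stmt_4_general
    (E : Type) [TopologicalSpace E] [CompactSpace E] [T2Space E]
    [SecondCountableTopology E] [MeasurableSpace E] [BorelSpace E]
    (β : ℝ) (hβ : 0 < β)
    (I : Set ℝ)
    (S : ∀ n : ℕ, (Fin n → C(E, ℂ)) → (Fin n → ℝ) → ℂ)
    (P : Measure (I → E)) (hP : IsProbabilityMeasure P)
    (hPmom : ∀ n : ℕ, 1 ≤ n → ∀ t : Fin n → ℝ, ∀ ht : ∀ i, t i ∈ I, Monotone t →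
      ∀ f : Fin n → C(E, ℂ),
        ∫ x, ∏ i, f i (x ⟨t i, ht i⟩) ∂P = S n f t)
    (hkey : ∀ f : C(E, ℂ),
      S 2 ![f, star f] ![-(β / 2), -(β / 2)] + S 2 ![star f, f] ![β / 2, β / 2]
        = S 2 ![f, star f] ![-(β / 2), β / 2] + S 2 ![star f, f] ![-(β / 2), β / 2]) :
    ∀ a b : I, (a : ℝ) = -(β / 2) → (b : ℝ) = β / 2 →
      ∀ᵐ x ∂P, x a = x b := by
  intro a b ha hb
  have hmoment : ∀ (g h : C(E, ℂ)) (u v : I), (u : ℝ) ≤ v →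
      ∫ x, g (x u) * h (x v) ∂P = S 2 ![g, h] ![u, v] := by
    intro g h u v huv
    simpa [Fin.prod_univ_two] using hPmom 2 one_le_two ![u, v]
      (fun i => by fin_cases i <;> simp) (by simpa [monotone_vecCons] using huv) ![g, h]
  have hab : (a : ℝ) ≤ b := by linarith
  refine ae_eq_of_forall_continuousMap_ae_eq fun f => ?_
  have hf := ae_apply_eq_of_integral_mul_star (μ := P) (measurable_pi_apply a)
    (measurable_pi_apply b) ⟨fun z => (f z : ℂ), by fun_prop⟩ ?_
  · filter_upwards [hf] with x hx
    exact Complex.ofReal_injective hx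
  rw [hmoment _ _ a a le_rfl, hmoment _ _ b b le_rfl, hmoment _ _ a b hab, hmoment _ _ a b hab,
    ha, hb]
  exact hkey _

/-- **periodicity.** Let `β > 0`, `I = [−β/2, β/2]`, and let `ℙ` be a
probability measure on `E^I` whose moments along nondecreasing tuples of times are given
by the moment family `𝒮`.  If for every continuous `f` one has
`𝒮_{f,f̄}(−β/2,−β/2) + 𝒮_{f̄,f}(β/2,β/2) = 𝒮_{f,f̄}(−β/2,β/2) + 𝒮_{f̄,f}(−β/2,β/2)`,
then the coordinates at times `−β/2` and `β/2` agree `ℙ`-almost surely. -/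
theorem stmt_4
    (E : Type) [TopologicalSpace E] [CompactSpace E] [T2Space E]
    [SecondCountableTopology E] [MeasurableSpace E] [BorelSpace E]
    (β : ℝ) (hβ : 0 < β)
    (I : Set ℝ) (hIdef : I = Set.Icc (-(β / 2)) (β / 2))
    (S : ∀ n : ℕ, (Fin n → C(E, ℂ)) → (Fin n → ℝ) → ℂ)
    (hScont : ∀ (n : ℕ) (f : Fin n → C(E, ℂ)),
      ContinuousOn (S n f) {t : Fin n → ℝ | (∀ i, t i ∈ I) ∧ Monotone t})
    (hSlin : ∀ (n : ℕ) (t : Fin n → ℝ), (∀ i, t i ∈ I) → Monotone t →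
      ∀ (f : Fin n → C(E, ℂ)) (i : Fin n) (c : ℂ) (g h : C(E, ℂ)),
        S n (Function.update f i (c • g + h)) t
          = c * S n (Function.update f i g) t + S n (Function.update f i h) t)
    (hSbdd : ∀ (n : ℕ) (t : Fin n → ℝ), (∀ i, t i ∈ I) → Monotone t →
      ∃ C > 0, ∀ f : Fin n → C(E, ℂ), ‖S n f t‖ ≤ C * ∏ i, ‖f i‖)
    (hScons : ∀ (n : ℕ) (t : Fin (n + 1) → ℝ), (∀ i, t i ∈ I) → Monotone t →
      ∀ (f : Fin (n + 1) → C(E, ℂ)) (i : Fin (n + 1)), f i = 1 →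
        S (n + 1) f t = S n (f ∘ i.succAbove) (t ∘ i.succAbove))
    (hSnorm : ∀ t : Fin 1 → ℝ, (∀ i, t i ∈ I) → S 1 (fun _ => 1) t = 1)
    (hSpos : ∀ (n : ℕ) (t : Fin n → ℝ), (∀ i, t i ∈ I) → Monotone t →
      ∀ f : Fin n → C(E, ℂ), (∀ i x, (f i x).im = 0 ∧ 0 ≤ (f i x).re) →
        0 ≤ (S n f t).re ∧ (S n f t).im = 0)
    (P : Measure (I → E)) (hP : IsProbabilityMeasure P)
    (hPmom : ∀ n : ℕ, 1 ≤ n → ∀ t : Fin n → ℝ, ∀ ht : ∀ i, t i ∈ I, Monotone t →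
      ∀ f : Fin n → C(E, ℂ),
        ∫ x, ∏ i, f i (x ⟨t i, ht i⟩) ∂P = S n f t)
    (hkey : ∀ f : C(E, ℂ),
      S 2 ![f, star f] ![-(β / 2), -(β / 2)] + S 2 ![star f, f] ![β / 2, β / 2]
        = S 2 ![f, star f] ![-(β / 2), β / 2] + S 2 ![star f, f] ![-(β / 2), β / 2]) :
    ∀ a b : I, (a : ℝ) = -(β / 2) → (b : ℝ) = β / 2 →
      ∀ᵐ x ∂P, x a = x b :=
  stmt_4_general E β hβ I S P hP hPmom hkey
end

section
/- Let β > 0, I = [−β/2, β/2], and let ℙ be any probability measure on E^I (product σ-algebra) satisfying ∫ f₁(x(t₁))⋯fₙ(x(tₙ)) dℙ(x) = 𝒮_{f₁,…,fₙ}(t₁,…,tₙ) for all n ≥ 1, (t₁,…,tₙ) ∈ I^n_≤ and fᵢ ∈ C(E,ℂ). Suppose the family satisfies the Osterwalder–Schrader positivity condition: for all n, m ≥ 1, all 0 ≤ t₁ ≤ ⋯ ≤ tₙ ≤ β/2, all f_{k,1},…,f_{k,n} ∈ C(E,ℂ) (k = 1,…,m) and all c₁,…,c_m ∈ ℂ,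 the number ∑_{k,l=1}^{m} conj(c_k)·c_l·𝒮_{f̄_{k,n},…,f̄_{k,1}, f_{l,1},…,f_{l,n}}(−tₙ,…,−t₁, t₁,…,tₙ) is real and nonnegative. Then for every n ≥ 1, every 0 ≤ t₁ ≤ ⋯ ≤ tₙ ≤ β/2, and every bounded Borel measurable function F : Eⁿ → ℂ, the integral ∫_{E^I} conj(F(x(−t₁),…,x(−tₙ)))·F(x(t₁),…,x(tₙ)) dℙ(x) is real and nonnegative. -/
/-!
Write `Tτ x = (x(τ₁),…,x(τₙ))`, `Tσ x = (x(σ₁),…,x(σₙ))` and `ν = Tτ₊ℙ + Tσ₊ℙ`. The form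
`F ↦ ∫ conj(F ∘ Tτ) · (F ∘ Tσ) dℙ` is `⟪F ∘ Tτ, F ∘ Tσ⟫` in `L²(ℙ)`, hence continuous on `L²(ν)`.
On linear combinations of products `∏ᵢ fᵢ(yᵢ)` the moment identities turn it into the OS sum,
so it is nonnegative there. By Stone–Weierstrass these combinations are uniformly dense in
`C(Eⁿ, ℂ)`, and continuous functions are dense in `L²(ν)`, so the form is nonnegative at every
bounded measurable `F`.
-/

open MeasureTheory ComplexConjugate
open scoped ComplexOrder InnerProductSpace

theorem Submodule.exists_fin_sum_smul_of_mem_span_range {R M α : Type*} [Semiring R]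
    [AddCommMonoid M] [Module R M] {v : α → M} {x : M} (hx : x ∈ span R (Set.range v)) :
    ∃ (m : ℕ) (c : Fin m → R) (f : Fin m → α), x = ∑ k, c k • v (f k) := by
  obtain ⟨m, c, g, rfl⟩ := mem_span_set'.mp hx
  choose f hf using fun k => (g k).2
  exact ⟨m, c, f, by simp [hf]⟩

theorem Fin.monotone_append_neg_rev {n : ℕ} {t : Fin n → ℝ} (ht : Monotone t)
    (h0 : ∀ i, 0 ≤ t i) : Monotone (Fin.append (fun i => -t i.rev) t) := by
  intro j k hjk
  induction j using Fin.addCases with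
  | left i =>
    induction k using Fin.addCases with
    | left i' =>
      rw [Fin.append_left, Fin.append_left, neg_le_neg_iff]
      exact ht (Fin.rev_le_rev.mpr hjk)
    | right i' =>
      rw [Fin.append_left, Fin.append_right]
      exact (neg_nonpos.mpr (h0 i.rev)).trans (h0 i')
  | right i =>
    induction k using Fin.addCases with
    | left i' => exact absurd hjk (by rw [Fin.le_def]; simp; omega)
    | right i' =>
      rw [Fin.append_right, Fin.append_right]
      exact ht (Fin.natAdd_le_natAdd_iff n |>.mp hjk)

namespace MeasureTheory.Lp

variable {Y X E : Type*} [MeasurableSpace Y] [MeasurableSpace X] [NormedAddCommGroup E]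
  [NormedSpace ℝ E] {p : ENNReal} [Fact (1 ≤ p)] {P : Measure Y} {ν : Measure X} {T : Y → X}

noncomputable def compOfMapLe (hT : Measurable T) (h : P.map T ≤ ν) : Lp E p ν →L[ℝ] Lp E p P :=
  (compMeasurePreservingₗᵢ ℝ T ⟨hT, rfl⟩).toContinuousLinearMap.comp
    (LpToLpOfMeasureLeSMul ENNReal.one_ne_top (by rwa [one_smul]))

theorem compOfMapLe_ae_eq (hT : Measurable T) (h : P.map T ≤ ν) {f : Lp E p ν} {g : X → E}
    (hfg : f =ᵐ[ν] g) : compOfMapLe hT h f =ᵐ[P] g ∘ T :=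
  (coeFn_compMeasurePreserving _ _).trans <| ae_eq_comp hT.aemeasurable <|
    (coeFn_LpToLpOfMeasureLeSMul _ _ _).trans <| (Measure.absolutelyContinuous_of_le h).ae_eq hfg

end MeasureTheory.Lp

section PullbackForm

variable {Y X : Type*} [MeasurableSpace Y] [MeasurableSpace X] [TopologicalSpace X]
  [CompactSpace X] {P : Measure Y} [IsFiniteMeasure P] {T₁ T₂ : Y → X}

theorem integrable_conj_comp_mul_comp [OpensMeasurableSpace X] (hT₁ : Measurable T₁)
    (hT₂ : Measurable T₂) (G H : C(X, ℂ)) :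
    Integrable (fun y => conj (G (T₁ y)) * H (T₂ y)) P := by
  refine Integrable.of_bound
    ((((Complex.continuous_conj.comp G.continuous).measurable.comp hT₁).mul
      (H.continuous.measurable.comp hT₂)).aestronglyMeasurable) (‖G‖ * ‖H‖)
    (ae_of_all _ fun y => ?_)
  rw [norm_mul, RCLike.norm_conj]
  exact mul_le_mul (G.norm_coe_le_norm _) (H.norm_coe_le_norm _) (norm_nonneg _) (norm_nonneg _)

theorem integral_conj_sum_comp_mul_sum_comp [OpensMeasurableSpace X] (hT₁ : Measurable T₁)
    (hT₂ : Measurable T₂) {m : ℕ} (c : Fin m → ℂ) (G : Fin m → C(X, ℂ)) :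
    ∫ y, conj ((∑ k, c k • G k) (T₁ y)) * (∑ k, c k • G k) (T₂ y) ∂P
      = ∑ k, ∑ l, conj (c k) * c l * ∫ y, conj (G k (T₁ y)) * G l (T₂ y) ∂P := by
  have hexpand : ∀ y, conj ((∑ k, c k • G k) (T₁ y)) * (∑ k, c k • G k) (T₂ y)
      = ∑ k, ∑ l, conj (c k) * c l * (conj (G k (T₁ y)) * G l (T₂ y)) := fun y => by
    simp only [ContinuousMap.coe_sum, Finset.sum_apply, ContinuousMap.coe_smul, Pi.smul_apply,
      smul_eq_mul, map_sum, map_mul, Finset.sum_mul_sum]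
    exact Finset.sum_congr rfl fun k _ => Finset.sum_congr rfl fun l _ => by ring
  have hint := integrable_conj_comp_mul_comp (P := P) hT₁ hT₂
  simp_rw [hexpand]
  rw [integral_finsetSum _ fun k _ => integrable_finsetSum _ fun l _ => (hint _ _).const_mul _]
  refine Finset.sum_congr rfl fun k _ => ?_
  rw [integral_finsetSum _ fun l _ => (hint _ _).const_mul _]
  simp_rw [integral_const_mul]

theorem integral_conj_comp_mul_comp_nonneg [BorelSpace X]
    [TopologicalSpace.PseudoMetrizableSpace X] (hT₁ : Measurable T₁) (hT₂ : Measurable T₂)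
    {A : Set C(X, ℂ)} (hA : Dense A) (hpos : ∀ G ∈ A, 0 ≤ ∫ y, conj (G (T₁ y)) * G (T₂ y) ∂P)
    {F : X → ℂ} (hF : MemLp F 2 (P.map T₁ + P.map T₂)) :
    0 ≤ ∫ y, conj (F (T₁ y)) * F (T₂ y) ∂P := by
  set ν := P.map T₁ + P.map T₂
  let C₁ : Lp ℂ 2 ν →L[ℝ] Lp ℂ 2 P := Lp.compOfMapLe hT₁ (Measure.le_add_right le_rfl)
  let C₂ : Lp ℂ 2 ν →L[ℝ] Lp ℂ 2 P := Lp.compOfMapLe hT₂ (Measure.le_add_left le_rfl)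
  have hform : ∀ (f : Lp ℂ 2 ν) (g : X → ℂ), f =ᵐ[ν] g →
      ⟪C₁ f, C₂ f⟫_ℂ = ∫ y, conj (g (T₁ y)) * g (T₂ y) ∂P := fun f g hfg => by
    rw [L2.inner_def]
    refine integral_congr_ae ?_
    filter_upwards [Lp.compOfMapLe_ae_eq hT₁ _ hfg, Lp.compOfMapLe_ae_eq hT₂ _ hfg] with y h₁ h₂
    rw [h₁, h₂, RCLike.inner_apply', Function.comp_apply, Function.comp_apply]
  have hclosed : IsClosed {f : Lp ℂ 2 ν | 0 ≤ ⟪C₁ f, C₂ f⟫_ℂ} :=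
    isClosed_le continuous_const (C₁.continuous.inner C₂.continuous)
  have hdense : Dense (ContinuousMap.toLp 2 ν ℂ '' A) :=
    (ContinuousMap.toLp_denseRange ℂ ν ℂ (ENNReal.ofNat_ne_top (n := 2))).dense_image
      (ContinuousLinearMap.continuous _) hA
  have hsub : ContinuousMap.toLp 2 ν ℂ '' A ⊆ {f | 0 ≤ ⟪C₁ f, C₂ f⟫_ℂ} := by
    rintro _ ⟨G, hG, rfl⟩
    rw [Set.mem_ofPred_eq, hform _ G (ContinuousMap.coeFn_toLp ν G)]
    exact hpos G hG
  rw [← hform _ F hF.coeFn_toLp]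
  exact hclosed.closure_subset_iff.mpr hsub (hdense.closure_eq ▸ Set.mem_univ _)

end PullbackForm

section PiProd

variable {ι E : Type*} [Fintype ι] [TopologicalSpace E]

noncomputable def piProd (f : ι → C(E, ℂ)) : C(ι → E, ℂ) :=
  ∏ i, (f i).comp (ContinuousMap.eval i)

@[simp]
theorem piProd_apply (f : ι → C(E, ℂ)) (y : ι → E) : piProd f y = ∏ i, f i (y i) := by
  simp [piProd]

theorem piProd_one : piProd (1 : ι → C(E, ℂ)) = 1 := by
  ext y; simp

theorem piProd_mul (f g : ι → C(E, ℂ)) : piProd (f * g) = piProd f * piProd g := by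
  ext y; simp [Finset.prod_mul_distrib]

theorem star_piProd (f : ι → C(E, ℂ)) : star (piProd f) = piProd (star f) := by
  ext y; simp

theorem exists_piProd_apply_ne [CompactSpace E] [T2Space E] {y y' : ι → E}
    (h : y ≠ y') : ∃ f : ι → C(E, ℂ), piProd f y ≠ piProd f y' := by
  classical
  obtain ⟨i, hi⟩ := Function.ne_iff.mp h
  obtain ⟨g, hg, hg', -⟩ := exists_continuous_zero_one_of_isClosed isClosed_singleton
    isClosed_singleton (Set.disjoint_singleton.mpr hi)
  set f : ι → C(E, ℂ) :=
    Function.update 1 i ((ContinuousMap.mk ((↑) : ℝ → ℂ) Complex.continuous_ofReal).comp g)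
  have hupdate : ∀ z : ι → E, piProd f z = g (z i) := fun z => by
    rw [piProd_apply, Fintype.prod_eq_single i fun j hj => by simp [f, Function.update_of_ne hj]]
    simp [f]
  exact ⟨f, by simp [hupdate, hg rfl, hg' rfl]⟩

theorem dense_span_range_piProd [CompactSpace E] [T2Space E] :
    Dense (Submodule.span ℂ (Set.range (piProd (ι := ι) (E := E))) : Set C(ι → E, ℂ)) := by
  set V := Submodule.span ℂ (Set.range (piProd (ι := ι) (E := E)))
  have hmul : ∀ x y, x ∈ V → y ∈ V → x * y ∈ V := fun x y hx hy => by
    have hxy := Submodule.mul_mem_mul hx hy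
    rw [Submodule.span_mul_span] at hxy
    refine Submodule.span_mono ?_ hxy
    rintro _ ⟨_, ⟨f, rfl⟩, _, ⟨g, rfl⟩, rfl⟩
    exact ⟨f * g, piProd_mul f g⟩
  let A : StarSubalgebra ℂ C(ι → E, ℂ) :=
    { V.toSubalgebra (Submodule.subset_span ⟨1, piProd_one⟩) hmul with
      star_mem' := fun {x} hx => by
        induction hx using Submodule.span_induction with
        | mem x hx =>
          obtain ⟨f, rfl⟩ := hx
          exact Submodule.subset_span ⟨star f, (star_piProd f).symm⟩
        | zero => simp
        | add x y _ _ hx hy => simpa using V.add_mem hx hy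
        | smul c x _ hx => simpa [star_smul] using V.smul_mem (star c) hx }
  have hsep : A.SeparatesPoints := fun y y' h => by
    obtain ⟨f, hf⟩ := exists_piProd_apply_ne h
    exact ⟨piProd f, ⟨piProd f, Submodule.subset_span ⟨f, rfl⟩, rfl⟩, hf⟩
  have hclosure := ContinuousMap.starSubalgebra_topologicalClosure_eq_top_of_separatesPoints A hsep
  rw [dense_iff_closure_eq, show (V : Set C(ι → E, ℂ)) = A from rfl,
    ← StarSubalgebra.topologicalClosure_coe, hclosure, StarSubalgebra.coe_top]

theorem conj_piProd_mul_piProd {m n : ℕ} (g : Fin m → C(E, ℂ)) (h : Fin n → C(E, ℂ))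
    (y : Fin m → E) (z : Fin n → E) :
    conj (piProd g y) * piProd h z
      = piProd (Fin.append (fun i => star (g i.rev)) h) (Fin.append (fun i => y i.rev) z) := by
  simp only [piProd_apply, Fin.prod_univ_add, Fin.append_left, Fin.append_right, map_prod]
  congr 1
  exact (Fin.rev_bijective.prod_comp fun i => conj (g i (y i))).symm

end PiProd

theorem integral_conj_piProd_mul_piProd {E : Type*} [TopologicalSpace E] [MeasurableSpace E]
    {I : Set ℝ} {P : Measure (I → E)} {S : ∀ n : ℕ, (Fin n → C(E, ℂ)) → (Fin n → ℝ) → ℂ}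
    (hPmom : ∀ n : ℕ, 1 ≤ n → ∀ t : Fin n → ℝ, ∀ ht : ∀ i, t i ∈ I, Monotone t →
      ∀ f : Fin n → C(E, ℂ), ∫ x, ∏ i, f i (x ⟨t i, ht i⟩) ∂P = S n f t)
    {n : ℕ} (hn : 1 ≤ n) {t : Fin n → ℝ} (htmono : Monotone t) (ht0 : ∀ i, 0 ≤ t i)
    {τ σ : Fin n → I} (hτ : ∀ i, (τ i : ℝ) = -(t i)) (hσ : ∀ i, (σ i : ℝ) = t i)
    (g h : Fin n → C(E, ℂ)) :
    ∫ x, conj (piProd g fun i => x (τ i)) * piProd h (fun i => x (σ i)) ∂P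
      = S (n + n) (Fin.append (fun i => star (g i.rev)) h)
          (Fin.append (fun i => -(t i.rev)) t) := by
  set ρ : Fin (n + n) → I := Fin.append (fun i => τ i.rev) σ
  have hρ : (fun j => (ρ j : ℝ)) = Fin.append (fun i => -(t i.rev)) t := by
    funext j
    refine Fin.addCases (fun i => ?_) (fun i => ?_) j
    · simp only [ρ, Fin.append_left, hτ]
    · simp only [ρ, Fin.append_right, hσ]
  have hmono : Monotone fun j => (ρ j : ℝ) := hρ ▸ Fin.monotone_append_neg_rev htmono ht0
  rw [← hρ, ← hPmom (n + n) (by omega) _ (fun j => (ρ j).2) hmono]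
  refine integral_congr_ae (ae_of_all _ fun x => ?_)
  have hx : Fin.append (fun i => x (τ i.rev)) (fun i => x (σ i)) = fun j => x (ρ j) := by
    funext j
    refine Fin.addCases (fun i => ?_) (fun i => ?_) j
    · simp only [ρ, Fin.append_left]
    · simp only [ρ, Fin.append_right]
  dsimp only
  rw [conj_piProd_mul_piProd, hx, piProd_apply]

theorem stmt_6_general
    (E : Type) [TopologicalSpace E] [CompactSpace E] [T2Space E]
    [SecondCountableTopology E] [MeasurableSpace E] [BorelSpace E]
    (β : ℝ)
    (I : Set ℝ)
    (S : ∀ n : ℕ, (Fin n → C(E, ℂ)) → (Fin n → ℝ) → ℂ)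
    (P : Measure (I → E)) (hP : IsProbabilityMeasure P)
    (hPmom : ∀ n : ℕ, 1 ≤ n → ∀ t : Fin n → ℝ, ∀ ht : ∀ i, t i ∈ I, Monotone t →
      ∀ f : Fin n → C(E, ℂ),
        ∫ x, ∏ i, f i (x ⟨t i, ht i⟩) ∂P = S n f t)
    (hOS : ∀ (n m : ℕ), 1 ≤ n → 1 ≤ m → ∀ t : Fin n → ℝ, Monotone t →
      (∀ i, t i ∈ Set.Icc 0 (β / 2)) →
      ∀ (f : Fin m → Fin n → C(E, ℂ)) (c : Fin m → ℂ),
        0 ≤ (∑ k, ∑ l, conj (c k) * c l *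
              S (n + n) (Fin.append (fun i => star (f k i.rev)) (f l))
                (Fin.append (fun i => -(t i.rev)) t)).re ∧
        (∑ k, ∑ l, conj (c k) * c l *
              S (n + n) (Fin.append (fun i => star (f k i.rev)) (f l))
                (Fin.append (fun i => -(t i.rev)) t)).im = 0) :
    ∀ n : ℕ, 1 ≤ n → ∀ t : Fin n → ℝ, Monotone t →
      (∀ i, t i ∈ Set.Icc 0 (β / 2)) →
      ∀ τ σ : Fin n → I, (∀ i, (τ i : ℝ) = -(t i)) → (∀ i, (σ i : ℝ) = t i) →
      ∀ F : (Fin n → E) → ℂ, Measurable F → (∃ C : ℝ, ∀ y, ‖F y‖ ≤ C) →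
        0 ≤ (∫ x, conj (F fun i => x (τ i)) * F (fun i => x (σ i)) ∂P).re ∧
        (∫ x, conj (F fun i => x (τ i)) * F (fun i => x (σ i)) ∂P).im = 0 := by
  intro n hn t htmono htmem τ σ hτ hσ F hFmeas ⟨C, hC⟩
  have hTτ : Measurable fun (x : I → E) i => x (τ i) :=
    measurable_pi_lambda _ fun i => measurable_pi_apply _
  have hTσ : Measurable fun (x : I → E) i => x (σ i) :=
    measurable_pi_lambda _ fun i => measurable_pi_apply _
  have hpos : ∀ G ∈ Submodule.span ℂ (Set.range piProd),
      0 ≤ ∫ x, conj (G fun i => x (τ i)) * G (fun i => x (σ i)) ∂P := by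
    intro G hG
    obtain ⟨m, c, f, rfl⟩ := Submodule.exists_fin_sum_smul_of_mem_span_range hG
    rw [integral_conj_sum_comp_mul_sum_comp hTτ hTσ]
    simp only [integral_conj_piProd_mul_piProd hPmom hn htmono (fun i => (htmem i).1) hτ hσ]
    rcases Nat.eq_zero_or_pos m with rfl | hm
    · simp
    · exact Complex.nonneg_iff.mpr ((hOS n m hn hm t htmono htmem f c).imp_right Eq.symm)
  have hF : MemLp F 2 (P.map (fun x i => x (τ i)) + P.map (fun x i => x (σ i))) :=
    MemLp.of_bound hFmeas.aestronglyMeasurable C (ae_of_all _ hC)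
  exact (Complex.nonneg_iff.mp (integral_conj_comp_mul_comp_nonneg hTτ hTσ
    dense_span_range_piProd hpos hF)).imp_right Eq.symm

/-- **Osterwalder–Schrader positivity.** Let `β > 0`, `I = [−β/2, β/2]`,
and let `ℙ` be a probability measure on `E^I` whose moments along nondecreasing tuples of
times are given by the moment family `𝒮`.  If `𝒮` satisfies OS positivity, then for all
`0 ≤ t₁ ≤ ⋯ ≤ tₙ ≤ β/2` and every bounded Borel measurable `F : Eⁿ → ℂ`, the integral
`∫ conj(F(x(−t₁),…,x(−tₙ))) · F(x(t₁),…,x(tₙ)) dℙ(x)` is real and nonnegative. -/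
theorem stmt_6
    (E : Type) [TopologicalSpace E] [CompactSpace E] [T2Space E]
    [SecondCountableTopology E] [MeasurableSpace E] [BorelSpace E]
    (β : ℝ) (hβ : 0 < β)
    (I : Set ℝ) (hIdef : I = Set.Icc (-(β / 2)) (β / 2))
    (S : ∀ n : ℕ, (Fin n → C(E, ℂ)) → (Fin n → ℝ) → ℂ)
    (hScont : ∀ (n : ℕ) (f : Fin n → C(E, ℂ)),
      ContinuousOn (S n f) {t : Fin n → ℝ | (∀ i, t i ∈ I) ∧ Monotone t})
    (hSlin : ∀ (n : ℕ) (t : Fin n → ℝ), (∀ i, t i ∈ I) → Monotone t →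
      ∀ (f : Fin n → C(E, ℂ)) (i : Fin n) (c : ℂ) (g h : C(E, ℂ)),
        S n (Function.update f i (c • g + h)) t
          = c * S n (Function.update f i g) t + S n (Function.update f i h) t)
    (hSbdd : ∀ (n : ℕ) (t : Fin n → ℝ), (∀ i, t i ∈ I) → Monotone t →
      ∃ C > 0, ∀ f : Fin n → C(E, ℂ), ‖S n f t‖ ≤ C * ∏ i, ‖f i‖)
    (hScons : ∀ (n : ℕ) (t : Fin (n + 1) → ℝ), (∀ i, t i ∈ I) → Monotone t →
      ∀ (f : Fin (n + 1) → C(E, ℂ)) (i : Fin (n + 1)), f i = 1 →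
        S (n + 1) f t = S n (f ∘ i.succAbove) (t ∘ i.succAbove))
    (hSnorm : ∀ t : Fin 1 → ℝ, (∀ i, t i ∈ I) → S 1 (fun _ => 1) t = 1)
    (hSpos : ∀ (n : ℕ) (t : Fin n → ℝ), (∀ i, t i ∈ I) → Monotone t →
      ∀ f : Fin n → C(E, ℂ), (∀ i x, (f i x).im = 0 ∧ 0 ≤ (f i x).re) →
        0 ≤ (S n f t).re ∧ (S n f t).im = 0)
    (P : Measure (I → E)) (hP : IsProbabilityMeasure P)
    (hPmom : ∀ n : ℕ, 1 ≤ n → ∀ t : Fin n → ℝ, ∀ ht : ∀ i, t i ∈ I, Monotone t →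
      ∀ f : Fin n → C(E, ℂ),
        ∫ x, ∏ i, f i (x ⟨t i, ht i⟩) ∂P = S n f t)
    (hOS : ∀ (n m : ℕ), 1 ≤ n → 1 ≤ m → ∀ t : Fin n → ℝ, Monotone t →
      (∀ i, t i ∈ Set.Icc 0 (β / 2)) →
      ∀ (f : Fin m → Fin n → C(E, ℂ)) (c : Fin m → ℂ),
        0 ≤ (∑ k, ∑ l, conj (c k) * c l *
              S (n + n) (Fin.append (fun i => star (f k i.rev)) (f l))
                (Fin.append (fun i => -(t i.rev)) t)).re ∧
        (∑ k, ∑ l, conj (c k) * c l *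
              S (n + n) (Fin.append (fun i => star (f k i.rev)) (f l))
                (Fin.append (fun i => -(t i.rev)) t)).im = 0) :
    ∀ n : ℕ, 1 ≤ n → ∀ t : Fin n → ℝ, Monotone t →
      (∀ i, t i ∈ Set.Icc 0 (β / 2)) →
      ∀ τ σ : Fin n → I, (∀ i, (τ i : ℝ) = -(t i)) → (∀ i, (σ i : ℝ) = t i) →
      ∀ F : (Fin n → E) → ℂ, Measurable F → (∃ C : ℝ, ∀ y, ‖F y‖ ≤ C) →
        0 ≤ (∫ x, conj (F fun i => x (τ i)) * F (fun i => x (σ i)) ∂P).re ∧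
        (∫ x, conj (F fun i => x (τ i)) * F (fun i => x (σ i)) ∂P).im = 0 :=
  stmt_6_general E β I S P hP hPmom hOS
end

section
/- Let K and H be complex Hilbert spaces, let R : K → K be a self-adjoint unitary operator (R* = R and R² = 1), let P₁ and P₂ be orthogonal projections on K with range(P₂) ⊆ range(P₁) and with R ∘ P₂ = P₂, and let V : K → H be a linear map satisfying ⟨V F, V G⟩_H = ⟨R F, G⟩_K for all F, G ∈ range(P₁). Then P₁ ∘ R ∘ P₁ = P₂ if and only if the closure of V(range(P₁)) in H equals the closure of V(range(P₂)) in H. -/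
/-!
If `P₁ R P₁ = P₂`, then for `F ∈ range P₁` the vector `X = F - P₂ F` lies in `range P₁` and
`‖V X‖² = ⟪R X, X⟫ = ⟪P₂ X, X⟫ = 0`, so `V F = V (P₂ F)` and already the images coincide.

Conversely, for `G ∈ range P₁` the vector `V G - V (P₂ G)` is orthogonal to `V (range P₂)`,
because `R` fixes `range P₂`. It is then orthogonal to the closure of `V (range P₂)`, which
contains `V (range P₁)`; this reads `⟪R F, G⟫ = ⟪P₂ F, G⟫` on `range P₁`, i.e. the compressions
of `R` and `P₂` to `range P₁` agree, and the compression of `P₂` is `P₂` itself.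
-/

open ContinuousLinearMap
open scoped InnerProductSpace

section Idempotent

variable {S M : Type*} [Semiring S] [TopologicalSpace M] [AddCommMonoid M] [Module S M]

lemma IsIdempotentElem.apply_of_mem_range {P : M →L[S] M} (hP : IsIdempotentElem P) {x : M}
    (hx : x ∈ Set.range P) : P x = x := by
  obtain ⟨y, rfl⟩ := hx
  exact congr($hP y)

lemma IsIdempotentElem.mul_eq_right_of_range_subset {P Q : M →L[S] M} (hP : IsIdempotentElem P)
    (h : Set.range Q ⊆ Set.range P) : P * Q = Q :=
  ext fun x => hP.apply_of_mem_range (h ⟨x, rfl⟩)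

end Idempotent

variable {𝕜 E F : Type*} [RCLike 𝕜]
  [NormedAddCommGroup E] [InnerProductSpace 𝕜 E] [CompleteSpace E]
  [NormedAddCommGroup F] [InnerProductSpace 𝕜 F]

lemma IsSelfAdjoint.inner_apply_left {A : E →L[𝕜] E} (hA : IsSelfAdjoint A) (x y : E) :
    ⟪A x, y⟫_𝕜 = ⟪x, A y⟫_𝕜 :=
  hA.isSymmetric x y

lemma IsSelfAdjoint.comp_comp_eq_of_range_subset {P Q : E →L[𝕜] E} (hP : IsSelfAdjoint P)
    (hPidem : IsIdempotentElem P) (hQ : IsSelfAdjoint Q) (h : Set.range Q ⊆ Set.range P) :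
    P ∘L Q ∘L P = Q := by
  have hPQ : P * Q = Q := hPidem.mul_eq_right_of_range_subset h
  have hQP : Q * P = Q := by simpa [hP.star_eq, hQ.star_eq] using congrArg star hPQ
  change P * (Q * P) = Q
  rw [hQP, hPQ]

lemma IsSelfAdjoint.comp_comp_eq_of_inner_eq {P A B : E →L[𝕜] E} (hP : IsSelfAdjoint P)
    (h : ∀ x ∈ Set.range P, ∀ y ∈ Set.range P, ⟪A x, y⟫_𝕜 = ⟪B x, y⟫_𝕜) :
    P ∘L A ∘L P = P ∘L B ∘L P := by
  ext x
  refine ext_inner_right 𝕜 fun y => ?_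
  simp only [comp_apply, hP.inner_apply_left _ y]
  exact h _ ⟨x, rfl⟩ _ ⟨y, rfl⟩

variable {R P₁ P₂ : E →L[𝕜] E} {V : E →ₗ[𝕜] F}

lemma image_range_eq_of_comp_comp_eq (hP₁ : IsSelfAdjoint P₁) (hP₁idem : IsIdempotentElem P₁)
    (hP₂idem : IsIdempotentElem P₂) (hrange : Set.range P₂ ⊆ Set.range P₁)
    (hV : ∀ x y, x ∈ Set.range P₁ → y ∈ Set.range P₁ → ⟪V x, V y⟫_𝕜 = ⟪R x, y⟫_𝕜)
    (h : P₁ ∘L R ∘L P₁ = P₂) :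
    V '' Set.range P₁ = V '' Set.range P₂ := by
  refine (Set.image_mono hrange).antisymm' ?_
  rintro _ ⟨x, hx, rfl⟩
  refine ⟨P₂ x, ⟨x, rfl⟩, ?_⟩
  set d := x - P₂ x
  have hd : P₁ d = d := by
    rw [map_sub, hP₁idem.apply_of_mem_range hx, hP₁idem.apply_of_mem_range (hrange ⟨x, rfl⟩)]
  have hRd : ⟪R d, d⟫_𝕜 = 0 :=
    calc ⟪R d, d⟫_𝕜 = ⟪R (P₁ d), P₁ d⟫_𝕜 := by rw [hd]
      _ = ⟪(P₁ ∘L R ∘L P₁) d, d⟫_𝕜 := (hP₁.inner_apply_left _ _).symm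
      _ = ⟪P₂ d, d⟫_𝕜 := by rw [h]
      _ = 0 := by rw [map_sub, hP₂idem.apply_of_mem_range ⟨x, rfl⟩, sub_self, inner_zero_left]
  have hVd : V d = 0 := inner_self_eq_zero.mp ((hV d d ⟨d, hd⟩ ⟨d, hd⟩).trans hRd)
  rw [map_sub, sub_eq_zero] at hVd
  exact hVd.symm

lemma inner_map_sub_map_apply_eq_zero (hP₂ : IsSelfAdjoint P₂) (hP₂idem : IsIdempotentElem P₂)
    (hrange : Set.range P₂ ⊆ Set.range P₁) (hRP₂ : R ∘L P₂ = P₂)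
    (hV : ∀ x y, x ∈ Set.range P₁ → y ∈ Set.range P₁ → ⟪V x, V y⟫_𝕜 = ⟪R x, y⟫_𝕜)
    {x y : E} (hx : x ∈ Set.range P₂) (hy : y ∈ Set.range P₁) :
    ⟪V x, V y - V (P₂ y)⟫_𝕜 = 0 := by
  have hRx : R x = x := by
    obtain ⟨w, rfl⟩ := hx
    exact congr($hRP₂ w)
  rw [inner_sub_right, hV x y (hrange hx) hy, hV x (P₂ y) (hrange hx) (hrange ⟨y, rfl⟩), hRx,
    ← hP₂.inner_apply_left, hP₂idem.apply_of_mem_range hx, sub_self]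

lemma inner_apply_eq_of_closure_image_eq (hR : IsSelfAdjoint R) (hP₂ : IsSelfAdjoint P₂)
    (hP₂idem : IsIdempotentElem P₂) (hrange : Set.range P₂ ⊆ Set.range P₁)
    (hRP₂ : R ∘L P₂ = P₂)
    (hV : ∀ x y, x ∈ Set.range P₁ → y ∈ Set.range P₁ → ⟪V x, V y⟫_𝕜 = ⟪R x, y⟫_𝕜)
    (h : closure (V '' Set.range P₁) = closure (V '' Set.range P₂))
    {x y : E} (hx : x ∈ Set.range P₁) (hy : y ∈ Set.range P₁) :
    ⟪R x, y⟫_𝕜 = ⟪P₂ x, y⟫_𝕜 := by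
  have horth : closure (V '' Set.range P₂) ⊆ {z | ⟪z, V y - V (P₂ y)⟫_𝕜 = 0} := by
    refine closure_minimal ?_ (isClosed_eq (by fun_prop) (by fun_prop))
    rintro _ ⟨x', hx', rfl⟩
    exact inner_map_sub_map_apply_eq_zero hP₂ hP₂idem hrange hRP₂ hV hx' hy
  have hVx : ⟪V x, V y - V (P₂ y)⟫_𝕜 = 0 := horth (h ▸ subset_closure ⟨x, hx, rfl⟩)
  rw [inner_sub_right, sub_eq_zero, hV x y hx hy, hV x _ hx (hrange ⟨y, rfl⟩)] at hVx
  rw [hVx, hR.inner_apply_left, ← comp_apply, hRP₂, ← hP₂.inner_apply_left]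

theorem stmt_7_general
    (K H : Type)
    [NormedAddCommGroup K] [InnerProductSpace ℂ K] [CompleteSpace K]
    [NormedAddCommGroup H] [InnerProductSpace ℂ H]
    (R P₁ P₂ : K →L[ℂ] K)
    (hRsa : star R = R)
    (hP₁sa : star P₁ = P₁) (hP₁idem : P₁ * P₁ = P₁)
    (hP₂sa : star P₂ = P₂) (hP₂idem : P₂ * P₂ = P₂)
    (hrange : Set.range P₂ ⊆ Set.range P₁)
    (hRP₂ : R ∘L P₂ = P₂)
    (V : K →ₗ[ℂ] H)
    (hV : ∀ F G : K, F ∈ Set.range P₁ → G ∈ Set.range P₁ →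
      (inner ℂ (V F) (V G) : ℂ) = inner ℂ (R F) G) :
    P₁ ∘L R ∘L P₁ = P₂ ↔
      closure (V '' Set.range P₁) = closure (V '' Set.range P₂) := by
  constructor
  · intro h
    rw [image_range_eq_of_comp_comp_eq hP₁sa hP₁idem hP₂idem hrange hV h]
  · intro h
    calc P₁ ∘L R ∘L P₁ = P₁ ∘L P₂ ∘L P₁ :=
          IsSelfAdjoint.comp_comp_eq_of_inner_eq hP₁sa fun x hx y hy =>
            inner_apply_eq_of_closure_image_eq hRsa hP₂sa hP₂idem hrange hRP₂ hV h hx hy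
      _ = P₂ := IsSelfAdjoint.comp_comp_eq_of_range_subset hP₁sa hP₁idem hP₂sa hrange

/-- Let `K`, `H` be complex Hilbert spaces, `R` a self-adjoint unitary
on `K`, `P₁`, `P₂` orthogonal projections with `range P₂ ⊆ range P₁` and `R ∘ P₂ = P₂`,
and `V : K → H` a linear map with `⟨V F, V G⟩ = ⟨R F, G⟩` for `F, G ∈ range P₁`.
Then `P₁ ∘ R ∘ P₁ = P₂` iff the closures of `V(range P₁)` and `V(range P₂)` in `H`
coincide. -/
theorem stmt_7
    (K H : Type)
    [NormedAddCommGroup K] [InnerProductSpace ℂ K] [CompleteSpace K]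
    [NormedAddCommGroup H] [InnerProductSpace ℂ H] [CompleteSpace H]
    (R P₁ P₂ : K →L[ℂ] K)
    (hRsa : star R = R) (hRunit : R * R = 1)
    (hP₁sa : star P₁ = P₁) (hP₁idem : P₁ * P₁ = P₁)
    (hP₂sa : star P₂ = P₂) (hP₂idem : P₂ * P₂ = P₂)
    (hrange : Set.range P₂ ⊆ Set.range P₁)
    (hRP₂ : R ∘L P₂ = P₂)
    (V : K →ₗ[ℂ] H)
    (hV : ∀ F G : K, F ∈ Set.range P₁ → G ∈ Set.range P₁ →
      (inner ℂ (V F) (V G) : ℂ) = inner ℂ (R F) G) :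
    P₁ ∘L R ∘L P₁ = P₂ ↔
      closure (V '' Set.range P₁) = closure (V '' Set.range P₂) :=
  stmt_7_general K H R P₁ P₂ hRsa hP₁sa hP₁idem hP₂sa hP₂idem hrange hRP₂ V hV
end

section
/- Let A be a unital associative ℂ-algebra with an involutive ring antiautomorphism (star), and let a : 𝔛 → A be a family satisfying the canonical anticommutation relations: a(x)·a(y) + a(y)·a(x) = 0 for all x, y, and star(a(x))·a(y) + a(y)·star(a(x)) = 1 if x = y and = 0 if x ≠ y. Then for every n ≥ 1 and x₁,…,xₙ ∈ 𝔛: (i) if x₁,…,xₙ are pairwise distinct, then star(a(xₙ))⋯star(a(x₁))·a(x₁)⋯a(xₙ) = ∏_{i=1}^{n} (star(a(xᵢ))·a(xᵢ)) (the ordered product over i = 1,…,n); (ii) if xᵢ = xⱼ for some i ≠ j, then star(a(xₙ))⋯star(a(x₁))·a(x₁)⋯a(xₙ) = 0. -/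
section aux
set_option linter.unusedSectionVars false
variable {𝔛 : Type} [DecidableEq 𝔛] {A : Type} [Ring A] [Algebra ℂ A] [StarRing A] (a : 𝔛 → A)

lemma aux_sq (hcar1 : ∀ x y : 𝔛, a x * a y + a y * a x = 0) (x : 𝔛) :
    a x * a x = 0 := by
  have h2 : (2 : ℂ) • (a x * a x) = 0 := by rw [two_smul]; exact hcar1 x x
  have := congrArg (fun z => (2⁻¹ : ℂ) • z) h2
  simpa [smul_smul] using this

lemma aux_anti (hcar1 : ∀ x y : 𝔛, a x * a y + a y * a x = 0) (x y : 𝔛) :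
    a x * a y = - (a y * a x) :=
  eq_neg_of_add_eq_zero_left (hcar1 x y)

lemma aux_move (hcar1 : ∀ x y : 𝔛, a x * a y + a y * a x = 0) (y : 𝔛) :
    ∀ l : List 𝔛, a y * (l.map a).prod = (-1 : A) ^ l.length * ((l.map a).prod * a y) := by
  intro l
  induction l with
  | nil => simp
  | cons z t ih =>
      simp only [List.map_cons, List.prod_cons, List.length_cons, pow_succ]
      rw [← mul_assoc, aux_anti a hcar1 y z, neg_mul, mul_assoc, ih,
        ← mul_assoc (a z), ← ((Commute.neg_one_left (a z)).pow_left t.length).eq,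
        mul_assoc, mul_neg_one, neg_mul, mul_assoc]

lemma aux_dup (hcar1 : ∀ x y : 𝔛, a x * a y + a y * a x = 0) :
    ∀ l : List 𝔛, ¬ l.Nodup → (l.map a).prod = 0 := by
  intro l
  induction l with
  | nil => intro h; exact absurd List.nodup_nil h
  | cons y t ih =>
      intro h
      by_cases ht : t.Nodup
      · have hy : y ∈ t := by
          by_contra hy
          exact h (List.nodup_cons.mpr ⟨hy, ht⟩)
        obtain ⟨s, u, rfl⟩ := List.append_of_mem hy
        simp only [List.map_cons, List.map_append, List.prod_cons, List.prod_append]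
        rw [← mul_assoc, aux_move a hcar1 y s, mul_assoc, mul_assoc, ← mul_assoc (a y),
          aux_sq a hcar1]
        simp
      · simp [List.map_cons, ih ht]

lemma aux_star_anti (hcar1 : ∀ x y : 𝔛, a x * a y + a y * a x = 0) (x y : 𝔛) :
    star (a y) * star (a x) = - (star (a x) * star (a y)) := by
  have := congrArg star (hcar1 x y)
  simp only [star_add, star_mul, star_zero] at this
  exact eq_neg_of_add_eq_zero_left this

lemma aux_rho_comm_star
    (hcar1 : ∀ x y : 𝔛, a x * a y + a y * a x = 0)
    (hcar2 : ∀ x y : 𝔛,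
      star (a x) * a y + a y * star (a x) = if x = y then 1 else 0)
    {x y : 𝔛} (h : y ≠ x) :
    Commute (star (a x) * a x) (star (a y)) := by
  have h2 : a x * star (a y) = - (star (a y) * a x) := by
    have := hcar2 y x
    rw [if_neg h] at this
    exact eq_neg_of_add_eq_zero_right this
  show star (a x) * a x * star (a y) = star (a y) * (star (a x) * a x)
  calc star (a x) * a x * star (a y) = star (a x) * (a x * star (a y)) := by
        rw [mul_assoc]
    _ = star (a x) * (-(star (a y) * a x)) := by rw [h2]
    _ = (-(star (a x) * star (a y))) * a x := by
        rw [mul_neg, neg_mul, mul_assoc]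
    _ = star (a y) * star (a x) * a x := by rw [← aux_star_anti a hcar1]
    _ = star (a y) * (star (a x) * a x) := by rw [mul_assoc]

lemma aux_main
    (hcar1 : ∀ x y : 𝔛, a x * a y + a y * a x = 0)
    (hcar2 : ∀ x y : 𝔛,
      star (a x) * a y + a y * star (a x) = if x = y then 1 else 0) :
    ∀ l : List 𝔛, l.Nodup →
      (l.map fun t => star (a t)).reverse.prod * (l.map a).prod
        = (l.map fun t => star (a t) * a t).prod := by
  intro l
  induction l with
  | nil => simp
  | cons y t ih =>
      intro h
      rw [List.nodup_cons] at h
      obtain ⟨hy, ht⟩ := h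
      have hcomm : Commute (star (a y) * a y)
          ((t.map fun t => star (a t)).reverse.prod) := by
        apply Commute.list_prod_right
        intro z hz
        rw [List.mem_reverse, List.mem_map] at hz
        obtain ⟨w, hw, rfl⟩ := hz
        exact aux_rho_comm_star a hcar1 hcar2 (fun e => hy (e ▸ hw))
      simp only [List.map_cons, List.reverse_cons, List.prod_append, List.prod_cons,
        List.prod_nil, mul_one]
      calc (t.map fun t => star (a t)).reverse.prod * star (a y) * (a y * (t.map a).prod)
          = (t.map fun t => star (a t)).reverse.prod * (star (a y) * a y) * (t.map a).prod := by
            rw [mul_assoc, mul_assoc, mul_assoc]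
        _ = (star (a y) * a y) * ((t.map fun t => star (a t)).reverse.prod * (t.map a).prod) := by
            rw [← hcomm.eq, mul_assoc]
        _ = (star (a y) * a y) * (t.map fun t => star (a t) * a t).prod := by rw [ih ht]

end aux

/-- For a family `a : 𝔛 → A` in a unital ℂ-algebra with star satisfying
the canonical anticommutation relations, for every `n ≥ 1` and `x₁,…,xₙ ∈ 𝔛`:
(i) if the `xᵢ` are pairwise distinct then
`star(a xₙ)⋯star(a x₁) · a x₁⋯a xₙ = ∏ᵢ (star(a xᵢ) · a xᵢ)` (ordered product), and
(ii) if `xᵢ = xⱼ` for some `i ≠ j` then the left-hand side is `0`. -/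
theorem stmt_8
    (𝔛 : Type) [DecidableEq 𝔛]
    (A : Type) [Ring A] [Algebra ℂ A] [StarRing A]
    (a : 𝔛 → A)
    (hcar1 : ∀ x y : 𝔛, a x * a y + a y * a x = 0)
    (hcar2 : ∀ x y : 𝔛,
      star (a x) * a y + a y * star (a x) = if x = y then 1 else 0) :
    ∀ n : ℕ, 1 ≤ n → ∀ x : Fin n → 𝔛,
      (Function.Injective x →
        (List.ofFn fun i => star (a (x i))).reverse.prod
            * (List.ofFn fun i => a (x i)).prod
          = (List.ofFn fun i => star (a (x i)) * a (x i)).prod) ∧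
      (∀ i j : Fin n, i ≠ j → x i = x j →
        (List.ofFn fun i => star (a (x i))).reverse.prod
            * (List.ofFn fun i => a (x i)).prod = 0) := by
  intro n _ x
  have e1 : (List.ofFn fun i => star (a (x i))) =
      ((List.ofFn x).map fun t => star (a t)) := by
    rw [List.map_ofFn]; rfl
  have e2 : (List.ofFn fun i => a (x i)) = ((List.ofFn x).map a) := by
    rw [List.map_ofFn]; rfl
  have e3 : (List.ofFn fun i => star (a (x i)) * a (x i)) =
      ((List.ofFn x).map fun t => star (a t) * a t) := by
    rw [List.map_ofFn]; rfl
  rw [e1, e2, e3]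
  constructor
  · intro hinj
    exact aux_main a hcar1 hcar2 _ (List.nodup_ofFn.mpr hinj)
  · intro i j hij hxij
    have hnd : ¬ (List.ofFn x).Nodup := by
      intro hnd
      exact hij (List.nodup_ofFn.mp hnd hxij)
    rw [aux_dup a hcar1 _ hnd, mul_zero]
end

section
/- Let ι be a countable type, X : ι → ℝ an injective function, and w : ι → ℝ with w(i) > 0 for all i, such that for every natural number n the family i ↦ |X(i)|ⁿ·w(i) is summable. Fix N ≥ 1 and assume ι has at least N elements. For a finite subset A ⊆ ι of cardinality N, let V(A) := ∏_{1 ≤ s < t ≤ N} (X(a_s) − X(a_t))², where a₁,…,a_N is any enumeration of A (the value is independent of the enumeration), and let W(A) := ∏_{i ∈ A} w(i). Then the family A ↦ V(A)·W(A), indexed by the N-element finite subsets of ι, is summable, and its sum Z_{w,N} := ∑_{A : |A| = N} V(A)·W(A) satisfies 0 < Z_{w,N} < ∞. -/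
open scoped BigOperators

/-- The squared Vandermonde factor `V(A) = ∏_{s<t} (X(a_s) − X(a_t))²` of a finite set
`A`, written (using injectivity of `X`) as the product over the pairs `(i,j) ∈ A × A`
with `X i < X j` of `(X i − X j)²`; this is independent of any enumeration of `A`. -/
noncomputable def vandermondeSq {ι : Type*} (X : ι → ℝ) (A : Finset ι) : ℝ :=
  ∏ p ∈ (A ×ˢ A).filter (fun p => X p.1 < X p.2), (X p.1 - X p.2) ^ 2

/-- The weight `W(A) = ∏_{i ∈ A} w(i)` of a finite set `A`. -/
noncomputable def weightProd {ι : Type*} (w : ι → ℝ) (A : Finset ι) : ℝ :=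
  ∏ i ∈ A, w i

/-- Let `ι` be countable, `X : ι → ℝ` injective, `w` strictly positive
with all moments `∑ᵢ |X i|ⁿ · w i` finite, and `N ≥ 1` with `ι` having at least `N`
elements.  Then the family `A ↦ V(A)·W(A)`, indexed by the `N`-element finite subsets of
`ι`, is summable and its sum `Z_{w,N}` satisfies `0 < Z_{w,N} < ∞`. -/
theorem stmt_11
    (ι : Type) [Countable ι]
    (X : ι → ℝ) (hX : Function.Injective X)
    (w : ι → ℝ) (hw : ∀ i, 0 < w i)
    (hmom : ∀ n : ℕ, Summable fun i => |X i| ^ n * w i)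
    (N : ℕ) (hN : 1 ≤ N) (hcard : ∃ A : Finset ι, A.card = N) :
    Summable (fun A : {A : Finset ι // A.card = N} =>
      vandermondeSq X A.1 * weightProd w A.1) ∧
    0 < ∑' A : {A : Finset ι // A.card = N},
      vandermondeSq X A.1 * weightProd w A.1 := by
  classical
  obtain ⟨A₀, hA₀⟩ := hcard
  set M : ℕ := 2 * (N * N) with hM
  set f : ι → ℝ := fun i => (1 + X i ^ 2) ^ M * w i with hfdef
  have hf0 : ∀ i, 0 ≤ f i := fun i =>
    mul_nonneg (pow_nonneg (by positivity) _) (hw i).le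
  -- f is summable
  have hfs : Summable f := by
    have heq : ∀ i, f i = ∑ k ∈ Finset.range (M + 1),
        (M.choose k : ℝ) * (|X i| ^ (2 * k) * w i) := by
      intro i
      rw [hfdef]
      simp only
      rw [add_comm (1 : ℝ), add_pow, Finset.sum_mul]
      refine Finset.sum_congr rfl fun k hk => ?_
      have h2 : (X i ^ 2) ^ k = |X i| ^ (2 * k) := by
        rw [pow_mul, sq_abs]
      rw [← h2]; ring
    exact (summable_sum fun k _ => (hmom (2 * k)).mul_left ((M.choose k : ℝ))).congr
      fun i => (heq i).symm
  -- nonnegativity of terms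
  have hVnn : ∀ A : Finset ι, 0 ≤ vandermondeSq X A := fun A =>
    Finset.prod_nonneg fun p _ => sq_nonneg _
  have hWpos : ∀ A : Finset ι, 0 < weightProd w A := fun A =>
    Finset.prod_pos fun i _ => hw i
  have hterm_nn : ∀ A : Finset ι, 0 ≤ vandermondeSq X A * weightProd w A :=
    fun A => mul_nonneg (hVnn A) (hWpos A).le
  -- key bound
  have key : ∀ A : Finset ι, A.card = N →
      vandermondeSq X A * weightProd w A ≤ 2 ^ (N * N) * ∏ i ∈ A, f i := by
    intro A hA
    set g : ι → ℝ := fun i => 1 + X i ^ 2 with hgdef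
    have hg1 : ∀ i, (1 : ℝ) ≤ g i := fun i => by simp [hgdef]; positivity
    have hone : ∀ B : Finset ι, (1 : ℝ) ≤ ∏ i ∈ B, g i := by
      intro B
      have := Finset.prod_le_prod (s := B) (f := fun _ : ι => (1:ℝ)) (g := g)
        (fun i _ => zero_le_one) (fun i _ => hg1 i)
      simpa using this
    have hG1 : (1 : ℝ) ≤ ∏ i ∈ A, g i := hone A
    have hsingle : ∀ j ∈ A, g j ≤ ∏ i ∈ A, g i := by
      intro j hj
      rw [← Finset.prod_erase_mul A g hj]
      nlinarith [hone (A.erase j), hg1 j]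
    set P := (A ×ˢ A).filter (fun p => X p.1 < X p.2) with hP
    have hPcard : P.card ≤ N * N := by
      calc P.card ≤ (A ×ˢ A).card := Finset.card_filter_le _ _
        _ = N * N := by rw [Finset.card_product, hA]
    have hstep : ∀ p ∈ P, (X p.1 - X p.2) ^ 2 ≤ 2 * (∏ i ∈ A, g i) ^ 2 := by
      intro p hp
      simp only [hP, Finset.mem_filter, Finset.mem_product] at hp
      have h1 : g p.1 ≤ ∏ i ∈ A, g i := hsingle p.1 hp.1.1
      have h2 : g p.2 ≤ ∏ i ∈ A, g i := hsingle p.2 hp.1.2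
      simp only [hgdef] at h1 h2
      nlinarith [sq_nonneg (X p.1 + X p.2), sq_nonneg (X p.1 * X p.2),
        mul_le_mul h1 h2 (by positivity) (le_trans zero_le_one hG1)]
    have hV : vandermondeSq X A ≤ (2 * (∏ i ∈ A, g i) ^ 2) ^ (N * N) := by
      have h1 : vandermondeSq X A ≤ ∏ _p ∈ P, (2 * (∏ i ∈ A, g i) ^ 2) :=
        Finset.prod_le_prod (fun p _ => sq_nonneg _) hstep
      have h2 : (∏ _p ∈ P, (2 * (∏ i ∈ A, g i) ^ 2)) =
          (2 * (∏ i ∈ A, g i) ^ 2) ^ P.card := Finset.prod_const _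
      have hbase : (1 : ℝ) ≤ 2 * (∏ i ∈ A, g i) ^ 2 := by nlinarith
      calc vandermondeSq X A ≤ (2 * (∏ i ∈ A, g i) ^ 2) ^ P.card := h2 ▸ h1
        _ ≤ (2 * (∏ i ∈ A, g i) ^ 2) ^ (N * N) := pow_le_pow_right₀ hbase hPcard
    have hV2 : vandermondeSq X A ≤ 2 ^ (N * N) * ∏ i ∈ A, g i ^ M := by
      calc vandermondeSq X A ≤ (2 * (∏ i ∈ A, g i) ^ 2) ^ (N * N) := hV
        _ = 2 ^ (N * N) * ∏ i ∈ A, g i ^ M := by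
            rw [mul_pow, ← pow_mul, ← Finset.prod_pow, hM, mul_comm 2 (N*N)]
    calc vandermondeSq X A * weightProd w A
        ≤ (2 ^ (N * N) * ∏ i ∈ A, g i ^ M) * weightProd w A :=
          mul_le_mul_of_nonneg_right hV2 (hWpos A).le
      _ = 2 ^ (N * N) * ∏ i ∈ A, f i := by
          rw [weightProd, mul_assoc, ← Finset.prod_mul_distrib]
  -- uniform bound on partial sums
  set C : ℝ := 2 ^ (N * N) * Real.exp (∑' i, f i) with hC
  have hbound : ∀ S : Finset {A : Finset ι // A.card = N},
      ∑ A ∈ S, vandermondeSq X A.1 * weightProd w A.1 ≤ C := by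
    intro S
    set T : Finset ι := S.sup fun A => A.1 with hT
    have h1 : ∑ A ∈ S, vandermondeSq X A.1 * weightProd w A.1 ≤
        ∑ A ∈ S, 2 ^ (N * N) * ∏ i ∈ A.1, f i :=
      Finset.sum_le_sum fun A _ => key A.1 A.2
    have h2 : ∑ A ∈ S, ∏ i ∈ A.1, f i = ∑ B ∈ S.image (fun A => A.1), ∏ i ∈ B, f i := by
      rw [Finset.sum_image (fun a _ b _ h => Subtype.ext h)]
    have h3 : S.image (fun A => A.1) ⊆ T.powerset := by
      intro B hB
      simp only [Finset.mem_image] at hB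
      obtain ⟨A, hA, rfl⟩ := hB
      exact Finset.mem_powerset.2 (Finset.le_sup hA)
    have h4 : ∑ B ∈ S.image (fun A => A.1), ∏ i ∈ B, f i ≤
        ∑ B ∈ T.powerset, ∏ i ∈ B, f i :=
      Finset.sum_le_sum_of_subset_of_nonneg h3
        (fun B _ _ => Finset.prod_nonneg fun i _ => hf0 i)
    have h5 : ∑ B ∈ T.powerset, ∏ i ∈ B, f i = ∏ i ∈ T, (f i + 1) := by
      rw [Finset.prod_add]; simp
    have h6 : ∏ i ∈ T, (f i + 1) ≤ Real.exp (∑ i ∈ T, f i) := by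
      rw [Real.exp_sum]
      exact Finset.prod_le_prod (fun i _ => add_nonneg (hf0 i) zero_le_one)
        (fun i _ => Real.add_one_le_exp _)
    have h7 : Real.exp (∑ i ∈ T, f i) ≤ Real.exp (∑' i, f i) :=
      Real.exp_le_exp.2 (Summable.sum_le_tsum T (fun i _ => hf0 i) hfs)
    calc ∑ A ∈ S, vandermondeSq X A.1 * weightProd w A.1
        ≤ ∑ A ∈ S, 2 ^ (N * N) * ∏ i ∈ A.1, f i := h1
      _ = 2 ^ (N * N) * ∑ A ∈ S, ∏ i ∈ A.1, f i := by rw [Finset.mul_sum]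
      _ ≤ 2 ^ (N * N) * Real.exp (∑' i, f i) := by
          have := (h2 ▸ h4).trans (le_of_eq h5) |>.trans (h6.trans h7)
          exact mul_le_mul_of_nonneg_left this (by positivity)
  have hsum : Summable (fun A : {A : Finset ι // A.card = N} =>
      vandermondeSq X A.1 * weightProd w A.1) :=
    summable_of_sum_le (fun A => hterm_nn A.1) hbound
  refine ⟨hsum, ?_⟩
  refine Summable.tsum_pos hsum (fun A => hterm_nn A.1) ⟨A₀, hA₀⟩ ?_
  refine mul_pos ?_ (hWpos A₀)
  refine Finset.prod_pos fun p hp => ?_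
  simp only [Finset.mem_filter] at hp
  have h : X p.1 - X p.2 ≠ 0 := sub_ne_zero.2 (ne_of_lt hp.2)
  positivity
end

section
/- Let ι be a countable type, X : ι → ℝ injective, and w : ι → ℝ with w(i) > 0 for all i and ∑ᵢ |X(i)|ⁿ·w(i) < ∞ for every natural number n. Fix N ≥ 1, assume ι has at least N elements, and let q₀,…,q_{N−1} : ℝ → ℝ be polynomials with deg(q_m) = m such that the functions p_m : ι → ℝ, p_m(i) := q_m(X(i))·√(w(i)), form an orthonormal family in ℓ²(ι), i.e., ∑ᵢ p_m(i)·p_l(i) = 1 if m = l and = 0 otherwise (0 ≤ m, l ≤ N−1). Define the Christoffel–Darboux kernel K(i,j) := ∑_{m=0}^{N−1} p_m(i)·p_m(j), and for an N-element finite subset A ⊆ ι set V(A) := ∏_{1 ≤ s < t ≤ N}(X(a_s) − X(a_t))² (for any enumeration a₁,…,a_N of A) and W(A) := ∏_{i∈A} w(i), with normalization Z := ∑_{A : |A| = N} V(A)·W(A) ∈ (0,∞). Then for every n ≥ 1 and all pairwise distinct i₁,…,iₙ ∈ ι: ∑_{A : |A| = N, {i₁,…,iₙ} ⊆ A} (V(A)·W(A))/Z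 = det [K(i_s, i_t)]_{s,t=1}^{n}. -/
open scoped BigOperators

/-- The normalized function `p_m(i) = q_m(X i) · √(w i)` attached to a polynomial `q`. -/
noncomputable def opFun {ι : Type*} (q : Polynomial ℝ) (X : ι → ℝ) (w : ι → ℝ)
    (i : ι) : ℝ :=
  q.eval (X i) * Real.sqrt (w i)

/-!
The Christoffel–Darboux kernel `K(i,j) = ∑_{m<N} p_m(i) p_m(j)` of an orthonormal family is the
kernel of an orthogonal projection of rank `N`: `∑_y K(i,y) K(y,j) = K(i,j)` and
`∑_y K(y,y) = N`. Expanding a bordered determinant along its first row and column, these two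
identities give `∑_{y ∉ B} det K_{B ∪ {y}} = (N - |B|) det K_B`, and a downward induction on `|B|`
turns this into `∑_{A ⊇ B, |A| = N} det K_A = det K_B`, the sum being exchanged with the choice of
`y` by nonnegativity of the principal minors. On the other hand, for `|A| = N` the matrix
`[q_m(X a)]` is a Vandermonde matrix times a triangular matrix carrying the leading coefficients,
so `det K_A = c² V(A) W(A)` with `c = ∏_m lc(q_m)`. Taking `B = ∅` gives `c² Z = 1`, and the ratio
is `det K_B` for `B = {i₁, …, iₙ}`.
-/

open Finset Matrix

namespace Matrix

variable {R : Type*} [CommRing R]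

theorem det_succ_eq_sub_sum_adjugate {k : ℕ} (M : Matrix (Fin (k + 1)) (Fin (k + 1)) R) :
    M.det = M 0 0 * (M.submatrix Fin.succ Fin.succ).det -
      ∑ s, ∑ t, M 0 t.succ * adjugate (M.submatrix Fin.succ Fin.succ) t s * M s.succ 0 := by
  cases k with
  | zero => simp
  | succ k =>
    rw [det_succ_row_zero, Fin.sum_univ_succ, Fin.succAbove_zero, Finset.sum_comm,
      sub_eq_add_neg, ← Finset.sum_neg_distrib]
    simp only [Fin.val_zero, pow_zero, one_mul]
    congr 1
    refine Finset.sum_congr rfl fun t _ => ?_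
    rw [det_succ_column_zero, Finset.mul_sum, ← Finset.sum_neg_distrib]
    refine Finset.sum_congr rfl fun s _ => ?_
    rw [adjugate_fin_succ_eq_det_submatrix]
    simp only [submatrix_apply, Fin.succ_succAbove_zero, submatrix_submatrix, Function.comp_def,
      Fin.succ_succAbove_succ, Fin.val_succ]
    ring

theorem trace_mul_adjugate {n : Type*} [Fintype n] [DecidableEq n] (B : Matrix n n R) :
    trace (B * adjugate B) = Fintype.card n * B.det := by
  simp [mul_adjugate, trace, mul_comm]

theorem det_eval_matrixOfPolynomials_eq_prod_leadingCoeff_mul {n : ℕ} (v : Fin n → R)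
    (p : Fin n → Polynomial R) (h_deg : ∀ i, (p i).natDegree = i) :
    (of fun i j => (p j).eval (v i)).det = (∏ i, (p i).leadingCoeff) * (vandermonde v).det := by
  rw [eval_matrixOfPolynomials_eq_vandermonde_mul_matrixOfPolynomials v p fun i => (h_deg i).le,
    det_mul, det_of_isUpperTriangular (matrixOfPolynomials_blockTriangular p fun i => (h_deg i).le),
    mul_comm]
  simp_rw [of_apply, Polynomial.leadingCoeff, h_deg]

end Matrix

theorem HasSum.sigma_of_nonneg {β : Type*} {γ : β → Type*} {f : (Σ b, γ b) → ℝ} {g : β → ℝ}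
    {a : ℝ} (hf : ∀ p, 0 ≤ f p) (hfib : ∀ b, HasSum (fun c => f ⟨b, c⟩) (g b)) (hg : HasSum g a) :
    HasSum f a := by
  refine hg.sigma_of_hasSum hfib ((summable_sigma_of_nonneg hf).2 ⟨fun b => (hfib b).summable, ?_⟩)
  simpa only [(hfib _).tsum_eq] using hg.summable

namespace Finset

variable {ι : Type*} [DecidableEq ι]

theorem exists_injective_image_univ_eq (B : Finset ι) :
    ∃ z : Fin #B → ι, Function.Injective z ∧ univ.image z = B :=
  ⟨fun s => B.equivFin.symm s, Subtype.val_injective.comp B.equivFin.symm.injective, by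
    ext a
    exact ⟨fun h => by obtain ⟨s, -, rfl⟩ := mem_image.mp h; exact (B.equivFin.symm s).2,
      fun ha => mem_image.mpr ⟨B.equivFin ⟨a, ha⟩, mem_univ _, by simp⟩⟩⟩

theorem exists_strictMono_comp_image_univ_eq {α : Type*} [LinearOrder α] {X : ι → α}
    (hX : Function.Injective X) {A : Finset ι} {n : ℕ} (hA : #A = n) :
    ∃ z : Fin n → ι, StrictMono (X ∘ z) ∧ univ.image z = A := by
  subst hA
  have hcard := card_image_of_injective A hX
  let e := (A.image X).orderEmbOfFin hcard
  choose z hzA hzX using fun s => mem_image.mp ((A.image X).orderEmbOfFin_mem hcard s)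
  have hz : StrictMono (X ∘ z) := fun s t hst => by simpa [hzX] using e.strictMono hst
  refine ⟨z, hz, eq_of_subset_of_card_le (image_subset_iff.mpr fun s _ => hzA s) ?_⟩
  rw [card_image_of_injective _ hz.injective.of_comp, card_univ, Fintype.card_fin]

def insertSupersetEquiv (B : Finset ι) (P : Finset ι → Prop) :
    (Σ y : {y // y ∉ B}, {A // P A ∧ insert y.1 B ⊆ A}) ≃
      Σ A : {A // P A ∧ B ⊆ A}, {y // y ∈ A.1 \ B} where
  toFun p := ⟨⟨p.2.1, p.2.2.1, (insert_subset_iff.mp p.2.2.2).2⟩,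
    ⟨p.1.1, mem_sdiff.mpr ⟨(insert_subset_iff.mp p.2.2.2).1, p.1.2⟩⟩⟩
  invFun q := ⟨⟨q.2.1, (mem_sdiff.mp q.2.2).2⟩,
    ⟨q.1.1, q.1.2.1, insert_subset (mem_sdiff.mp q.2.2).1 q.1.2.2⟩⟩
  left_inv _ := rfl
  right_inv _ := rfl

end Finset

section PrincipalMinor

variable {ι : Type*} [DecidableEq ι]

noncomputable def principalMinor {R : Type*} [CommRing R] (K : ι → ι → R) (A : Finset ι) : R :=
  (of fun a b : A => K a b).det

theorem principalMinor_image_univ {R : Type*} [CommRing R] (K : ι → ι → R) {m : ℕ}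
    {z : Fin m → ι} (hz : Function.Injective z) :
    principalMinor K (univ.image z) = (of fun s t => K (z s) (z t)).det := by
  let e : Fin m ≃ univ.image z :=
    Equiv.ofBijective (fun s => ⟨z s, mem_image_of_mem z (mem_univ s)⟩)
      ⟨fun s t h => hz (congrArg Subtype.val h), fun ⟨a, ha⟩ => by
        obtain ⟨s, -, rfl⟩ := mem_image.mp ha
        exact ⟨s, rfl⟩⟩
  exact (det_submatrix_equiv_self e _).symm

end PrincipalMinor

section ProjectionKernel

variable {ι : Type*} {K : ι → ι → ℝ} {N : ℕ}

theorem hasSum_det_vecCons (hrep : ∀ i j, HasSum (fun y => K i y * K y j) (K i j))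
    (htr : HasSum (fun y => K y y) N) {k : ℕ} (x : Fin k → ι) :
    HasSum (fun y => (of fun s t => K (vecCons y x s) (vecCons y x t)).det)
      ((N - k) * (of fun s t => K (x s) (x t)).det) := by
  set B := of fun s t => K (x s) (x t)
  have expand : ∀ y, (of fun s t => K (vecCons y x s) (vecCons y x t)).det =
      K y y * B.det - ∑ s, ∑ t, adjugate B t s * (K (x s) y * K y (x t)) := by
    intro y
    have hB : (of fun s t => K (vecCons y x s) (vecCons y x t)).submatrix Fin.succ Fin.succ = B :=
      rfl
    rw [det_succ_eq_sub_sum_adjugate, hB]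
    simp only [of_apply, cons_val_zero, cons_val_succ]
    congr 1
    exact sum_congr rfl fun s _ => sum_congr rfl fun t _ => by ring
  have htrace : ∑ s, ∑ t, adjugate B t s * K (x s) (x t) = (k : ℝ) * B.det := by
    simpa [B, trace, mul_apply, mul_comm] using trace_mul_adjugate B
  have hsum := (htr.mul_right B.det).sub (hasSum_sum (s := univ) fun s _ =>
    hasSum_sum (s := univ) fun t _ => (hrep (x s) (x t)).mul_left (adjugate B t s))
  rw [htrace, ← sub_mul] at hsum
  simpa only [expand] using hsum

variable [DecidableEq ι]

theorem hasSum_principalMinor_insert (hrep : ∀ i j, HasSum (fun y => K i y * K y j) (K i j))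
    (htr : HasSum (fun y => K y y) N) (B : Finset ι) :
    HasSum (fun y : {y // y ∉ B} => principalMinor K (insert y.1 B))
      ((N - #B) * principalMinor K B) := by
  obtain ⟨z, hz, hzB⟩ := B.exists_injective_image_univ_eq
  have hcons : ∀ y ∉ B, principalMinor K (insert y B) =
      (of fun s t => K (vecCons y z s) (vecCons y z t)).det := by
    intro y hy
    have hinj : Function.Injective (vecCons y z) :=
      Fin.cons_injective_iff.mpr ⟨by simpa [← hzB] using hy, hz⟩
    rw [← principalMinor_image_univ K hinj]
    congr
    apply Finset.coe_injective
    simp [Matrix.range_cons, ← hzB]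
  have hrepeated : ∀ y ∈ B, (of fun s t => K (vecCons y z s) (vecCons y z t)).det = 0 := by
    intro y hy
    obtain ⟨s, -, rfl⟩ := mem_image.mp (hzB ▸ hy)
    exact det_zero_of_row_eq (i := 0) (j := s.succ) (Fin.succ_ne_zero s).symm (by ext; simp)
  have hall := hasSum_det_vecCons hrep htr z
  rw [← add_zero ((N - #B : ℝ) * _), ← sum_eq_zero hrepeated, ← B.hasSum_compl_iff] at hall
  rw [← hzB, principalMinor_image_univ K hz, hzB]
  exact hall.congr_fun fun y => hcons y.1 y.2

theorem hasSum_principalMinor_superset (hrep : ∀ i j, HasSum (fun y => K i y * K y j) (K i j))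
    (htr : HasSum (fun y => K y y) N) (hpos : ∀ A : Finset ι, #A = N → 0 ≤ principalMinor K A)
    (B : Finset ι) (hB : #B ≤ N) :
    HasSum (fun A : {A : Finset ι // #A = N ∧ B ⊆ A} => principalMinor K A)
      (principalMinor K B) := by
  induction hd : N - #B generalizing B with
  | zero =>
    have hBN : #B = N := by omega
    have hunique (A : {A : Finset ι // #A = N ∧ B ⊆ A}) : A = ⟨B, hBN, subset_rfl⟩ :=
      Subtype.ext (eq_of_subset_of_card_le A.2.2 (by omega)).symm
    exact hasSum_single (f := fun A : {A : Finset ι // #A = N ∧ B ⊆ A} => principalMinor K A)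
      ⟨B, hBN, subset_rfl⟩ fun A hA => (hA (hunique A)).elim
  | succ d ih =>
    have hfib (y : {y // y ∉ B}) : HasSum (fun A : {A // #A = N ∧ insert y.1 B ⊆ A} =>
        principalMinor K A) (principalMinor K (insert y.1 B)) := by
      apply ih <;> rw [card_insert_of_notMem y.2] <;> omega
    have hpairs : HasSum (fun p : Σ y : {y // y ∉ B}, {A // #A = N ∧ insert y.1 B ⊆ A} =>
        principalMinor K p.2.1) ((N - #B) * principalMinor K B) :=
      .sigma_of_nonneg (fun p => hpos _ p.2.2.1) hfib (hasSum_principalMinor_insert hrep htr B)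
    -- each `A ⊇ B` is reached once for each of the `N - #B` points `y ∈ A \ B`
    have hcount (A : {A // #A = N ∧ B ⊆ A}) : HasSum (fun _ : {y // y ∈ A.1 \ B} =>
        principalMinor K A) ((N - #B) * principalMinor K A) := by
      convert hasSum_fintype _ using 1
      rw [sum_const, card_univ, Fintype.card_coe, card_sdiff_of_subset A.2.2, A.2.1, nsmul_eq_mul,
        Nat.cast_sub hB]
    have hNB : (N - #B : ℝ) ≠ 0 := sub_ne_zero.mpr (by norm_cast; omega)
    exact (hasSum_mul_left_iff hNB).mp
      (((B.insertSupersetEquiv _).symm.hasSum_iff.mpr hpairs).sigma hcount)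

end ProjectionKernel

section ChristoffelDarboux

variable {ι κ : Type*} [Fintype κ]

noncomputable def christoffelDarbouxKernel (p : κ → ι → ℝ) (i j : ι) : ℝ :=
  ∑ m, p m i * p m j

variable {p : κ → ι → ℝ}

theorem hasSum_christoffelDarbouxKernel_mul [DecidableEq κ]
    (horth : ∀ m l, HasSum (fun i => p m i * p l i) (if m = l then 1 else 0)) (i j : ι) :
    HasSum (fun y => christoffelDarbouxKernel p i y * christoffelDarbouxKernel p y j)
      (christoffelDarbouxKernel p i j) := by
  have h := hasSum_sum (s := univ) fun m _ => hasSum_sum (s := univ) fun l _ =>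
    (horth m l).mul_left (p m i * p l j)
  simp only [mul_ite, mul_one, mul_zero, sum_ite_eq, mem_univ, if_true] at h
  refine h.congr_fun fun y => ?_
  rw [christoffelDarbouxKernel, christoffelDarbouxKernel, sum_mul_sum]
  exact sum_congr rfl fun m _ => sum_congr rfl fun l _ => by ring

theorem hasSum_christoffelDarbouxKernel_self [DecidableEq κ]
    (horth : ∀ m l, HasSum (fun i => p m i * p l i) (if m = l then 1 else 0)) :
    HasSum (fun y => christoffelDarbouxKernel p y y) (Fintype.card κ) := by
  simpa [christoffelDarbouxKernel] using hasSum_sum (s := univ) fun m _ => horth m m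

theorem christoffelDarbouxKernel_comp_eq_transpose_mul {n : Type*} (z : n → ι) :
    (of fun s t => christoffelDarbouxKernel p (z s) (z t)) =
      (of fun m t => p m (z t))ᵀ * of fun m t => p m (z t) := by
  ext s t
  simp [christoffelDarbouxKernel, mul_apply]

theorem principalMinor_christoffelDarbouxKernel_nonneg [DecidableEq ι] (A : Finset ι) :
    0 ≤ principalMinor (christoffelDarbouxKernel p) A := by
  rw [principalMinor, christoffelDarbouxKernel_comp_eq_transpose_mul (fun a : A => (a : ι)),
    ← conjTranspose_eq_transpose_of_trivial]
  exact (posSemidef_conjTranspose_mul_self _).det_nonneg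

theorem det_christoffelDarbouxKernel_comp_eq_sq [DecidableEq κ] (z : κ → ι) :
    (of fun s t => christoffelDarbouxKernel p (z s) (z t)).det =
      (of fun m t => p m (z t)).det ^ 2 := by
  rw [christoffelDarbouxKernel_comp_eq_transpose_mul, det_mul, det_transpose, sq]

theorem det_christoffelDarbouxKernel_comp_eq_zero {n : Type*} [Fintype n] [DecidableEq n]
    (hn : Fintype.card κ < Fintype.card n) (z : n → ι) :
    (of fun s t => christoffelDarbouxKernel p (z s) (z t)).det = 0 := by
  by_contra hdet
  have hrank := (rank_of_det_ne_zero hdet).symm.le.trans <|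
    (rank_mul_le_right _ _).trans (rank_le_card_height (of fun m t => p m (z t)))
  omega

end ChristoffelDarboux

section OrthogonalPolynomialEnsemble

variable {ι : Type*} [DecidableEq ι] {X : ι → ℝ} {w : ι → ℝ} {N : ℕ} {q : Fin N → Polynomial ℝ}

theorem vandermondeSq_image_univ {n : ℕ} {z : Fin n → ι} (hz : StrictMono (X ∘ z)) :
    vandermondeSq X (univ.image z) = (vandermonde (X ∘ z)).det ^ 2 := by
  have hpairs : (univ.image z ×ˢ univ.image z).filter (fun p => X p.1 < X p.2) =
      ((univ ×ˢ univ).filter (fun p : Fin n × Fin n => p.1 < p.2)).image (Prod.map z z) := by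
    rw [← prodMap_image_product, filter_image]
    simp only [Prod.map_fst, Prod.map_snd]
    congr 1
    exact filter_congr fun p _ => hz.lt_iff_lt
  rw [vandermondeSq, hpairs, prod_image (hz.injective.of_comp.prodMap hz.injective.of_comp).injOn,
    det_vandermonde, ← prod_pow, prod_finset_product _ univ Ioi (by simp)]
  simp_rw [← prod_pow]
  exact prod_congr rfl fun i _ => prod_congr rfl fun j _ => by simp; ring

theorem principalMinor_christoffelDarbouxKernel_opFun (hX : Function.Injective X)
    (hw : ∀ i, 0 ≤ w i) (hdeg : ∀ m, (q m).natDegree = m) {A : Finset ι} (hA : #A = N) :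
    principalMinor (christoffelDarbouxKernel fun m => opFun (q m) X w) A =
      (∏ m, (q m).leadingCoeff) ^ 2 * (vandermondeSq X A * weightProd w A) := by
  obtain ⟨z, hz, rfl⟩ := exists_strictMono_comp_image_univ_eq hX hA
  have hzinj : Function.Injective z := hz.injective.of_comp
  have hP : (of fun m t => opFun (q m) X w (z t)) =
      (of fun t m => (q m).eval (X (z t)))ᵀ * diagonal fun t => √(w (z t)) := by
    ext m t
    simp [opFun]
  have hsqrt : (∏ t, √(w (z t))) ^ 2 = ∏ t, w (z t) := by
    rw [← prod_pow]
    exact prod_congr rfl fun t _ => Real.sq_sqrt (hw _)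
  rw [principalMinor_image_univ _ hzinj, det_christoffelDarbouxKernel_comp_eq_sq, hP, det_mul,
    det_transpose, det_diagonal, det_eval_matrixOfPolynomials_eq_prod_leadingCoeff_mul _ _ hdeg,
    vandermondeSq_image_univ hz, weightProd, prod_image hzinj.injOn, mul_pow, mul_pow, hsqrt,
    mul_assoc]
  rfl

theorem hasSum_vandermondeSq_mul_weightProd (hX : Function.Injective X) (hw : ∀ i, 0 ≤ w i)
    (hdeg : ∀ m, (q m).natDegree = m)
    (horth : ∀ m l, HasSum (fun i => opFun (q m) X w i * opFun (q l) X w i)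
      (if m = l then 1 else 0))
    {B : Finset ι} (hB : #B ≤ N) :
    HasSum (fun A : {A : Finset ι // #A = N ∧ B ⊆ A} =>
        (∏ m, (q m).leadingCoeff) ^ 2 * (vandermondeSq X A * weightProd w A))
      (principalMinor (christoffelDarbouxKernel fun m => opFun (q m) X w) B) := by
  have htr := hasSum_christoffelDarbouxKernel_self horth
  rw [Fintype.card_fin] at htr
  have hminors := hasSum_principalMinor_superset (hasSum_christoffelDarbouxKernel_mul horth) htr
    (fun A _ => principalMinor_christoffelDarbouxKernel_nonneg A) B hB
  exact hminors.congr_fun fun A =>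
    (principalMinor_christoffelDarbouxKernel_opFun hX hw hdeg A.2.1).symm

end OrthogonalPolynomialEnsemble

theorem stmt_13_general
    (ι : Type)
    (X : ι → ℝ) (hX : Function.Injective X)
    (w : ι → ℝ) (hw : ∀ i, 0 < w i)
    (N : ℕ)
    (q : Fin N → Polynomial ℝ)
    (hdeg : ∀ m : Fin N, (q m).degree = (m : ℕ))
    (horth : ∀ m l : Fin N,
      HasSum (fun i => opFun (q m) X w i * opFun (q l) X w i)
        (if m = l then 1 else 0)) :
    ∀ n : ℕ, 1 ≤ n → ∀ x : Fin n → ι, Function.Injective x →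
      (∑' A : {A : Finset ι // A.card = N ∧ ∀ s, x s ∈ A},
          vandermondeSq X A.1 * weightProd w A.1)
        / (∑' A : {A : Finset ι // A.card = N},
            vandermondeSq X A.1 * weightProd w A.1)
      = Matrix.det (Matrix.of fun s t : Fin n =>
          ∑ m : Fin N, opFun (q m) X w (x s) * opFun (q m) X w (x t)) := by
  classical
  intro n _ x hx
  set c := ∏ m, (q m).leadingCoeff
  have hw' (i : ι) : 0 ≤ w i := (hw i).le
  have hdeg' (m : Fin N) : (q m).natDegree = m := Polynomial.natDegree_eq_of_degree_eq_some (hdeg m)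
  have hcard : #(univ.image x) = n := by rw [card_image_of_injective _ hx, card_fin]
  have hZ : c ^ 2 * ∑' A : {A : Finset ι // #A = N}, vandermondeSq X A * weightProd w A = 1 := by
    rw [← tsum_mul_left, tsum_congr_subtype (fun A => c ^ 2 * (vandermondeSq X A * weightProd w A))
      fun A => (and_iff_left (empty_subset A)).symm]
    simpa [principalMinor] using
      (hasSum_vandermondeSq_mul_weightProd hX hw' hdeg' horth (B := ∅) (by simp)).tsum_eq
  by_cases hnN : n ≤ N
  · have hnum : c ^ 2 * ∑' A : {A : Finset ι // #A = N ∧ ∀ s, x s ∈ A},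
        vandermondeSq X A * weightProd w A =
          (of fun s t => christoffelDarbouxKernel (fun m => opFun (q m) X w) (x s) (x t)).det := by
      rw [← tsum_mul_left,
        tsum_congr_subtype (fun A => c ^ 2 * (vandermondeSq X A * weightProd w A))
          (Q := fun A => #A = N ∧ univ.image x ⊆ A) (by simp [image_subset_iff]),
        ← principalMinor_image_univ _ hx]
      exact (hasSum_vandermondeSq_mul_weightProd hX hw' hdeg' horth (hcard.trans_le hnN)).tsum_eq
    rw [← mul_div_mul_left _ _ (left_ne_zero_of_mul_eq_one hZ), hnum, hZ, div_one]
    rfl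
  · have : IsEmpty {A : Finset ι // #A = N ∧ ∀ s, x s ∈ A} := ⟨fun A => hnN <| by
      simpa [hcard, A.2.1] using
        card_le_card (image_subset_iff.mpr fun s (_ : s ∈ univ) => A.2.2 s)⟩
    rw [tsum_empty, zero_div]
    exact (det_christoffelDarbouxKernel_comp_eq_zero (by simpa using hnN) x).symm

/-- The `N`-point orthogonal polynomial ensemble is determinantal with
correlation kernel the normalized Christoffel–Darboux kernel
`K(i,j) = ∑_{m<N} p_m(i) p_m(j)`: for pairwise distinct `i₁,…,iₙ`, the `n`-th correlation
function `∑_{A ⊇ {i₁,…,iₙ}, |A| = N} V(A)·W(A) / Z` equals `det [K(i_s, i_t)]`. -/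
theorem stmt_13
    (ι : Type) [Countable ι]
    (X : ι → ℝ) (hX : Function.Injective X)
    (w : ι → ℝ) (hw : ∀ i, 0 < w i)
    (hmom : ∀ n : ℕ, Summable fun i => |X i| ^ n * w i)
    (N : ℕ) (hN : 1 ≤ N) (hcard : ∃ A : Finset ι, A.card = N)
    (q : Fin N → Polynomial ℝ)
    (hdeg : ∀ m : Fin N, (q m).degree = (m : ℕ))
    (horth : ∀ m l : Fin N,
      HasSum (fun i => opFun (q m) X w i * opFun (q l) X w i)
        (if m = l then 1 else 0)) :
    ∀ n : ℕ, 1 ≤ n → ∀ x : Fin n → ι, Function.Injective x →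
      (∑' A : {A : Finset ι // A.card = N ∧ ∀ s, x s ∈ A},
          vandermondeSq X A.1 * weightProd w A.1)
        / (∑' A : {A : Finset ι // A.card = N},
            vandermondeSq X A.1 * weightProd w A.1)
      = Matrix.det (Matrix.of fun s t : Fin n =>
          ∑ m : Fin N, opFun (q m) X w (x s) * opFun (q m) X w (x t)) :=
  stmt_13_general ι X hX w hw N q hdeg horth
end
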